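/- arXiv:1509.04985 — 12 statements merged into one kernel-verified Lean document; each statement's English description precedes it below -/
import Mathlib

section
/- The space C_k(ω*, ω*) of continuous self-maps of the Stone–Čech remainder ω* of the natural numbers, equipped with the compact-open topology, is a Baire space. -/
/-!
Model `ω*` as the space of free ultrafilters on `ℕ`, whose clopen sets are exactly the sets
`a* = {u | a ∈ u}`. A finite partition `(cᵢ)` of `ℕ` with infinite targets `(sᵢ)` determines the
open set of maps `h` with `h(cᵢ*) ⊆ sᵢ*` for all `i`. These sets form a base at every map `g`,
and any two of them containing `g` contain a third one refining both: on the common refinement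
of the partitions, `g` sends each nonempty piece into the intersection of the two targets, which
is therefore infinite. Along a decreasing sequence of such conditions choose `F k > k` in the
stage-`k` target of the piece containing `k`; the extension of `F` to `ω*` satisfies every
condition of the sequence, so a Banach–Mazur argument gives the Baire property.
-/

open Set Filter Function Topology

/-- `ω*`, the Stone–Čech remainder of the natural numbers: the subspace of points of the
Stone–Čech compactification of the discrete space `ℕ` that are not in the image of `ℕ`. -/
abbrev OmegaStar : Type := {x : StoneCech ℕ // x ∉ Set.range stoneCechUnit}

theorem BaireSpace.of_iInter_antitone_nonempty {X ι : Type*} [TopologicalSpace X] [Preorder ι]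
    [OrderTop ι] (B : ι → Set X) (hB : ∀ i, IsOpen (B i)) (hB_top : B ⊤ = univ)
    (hrefine : ∀ i V, IsOpen V → (B i ∩ V).Nonempty → ∃ j ≤ i, B j ⊆ B i ∩ V)
    (hchain : ∀ c : ℕ → ι, Antitone c → (⋂ n, B (c n)).Nonempty) : BaireSpace X := by
  refine ⟨fun f hfo hfd => dense_iff_inter_open.2 fun V hVo hVne => ?_⟩
  have hB_ne (i : ι) : (B i).Nonempty := (hchain _ antitone_const).mono (iInter_subset _ 0)
  choose next hnext_le hnext_sub using fun i n =>
    hrefine i (f n) (hfo n) ((hfd n).inter_open_nonempty _ (hB i) (hB_ne i))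
  obtain ⟨i₀, -, hi₀⟩ := hrefine ⊤ V hVo (by rwa [hB_top, univ_inter])
  let c : ℕ → ι := fun n => Nat.rec i₀ (fun n i => next i n) n
  obtain ⟨x, hx⟩ := hchain c (antitone_nat_of_succ_le fun n => hnext_le (c n) n)
  rw [mem_iInter] at hx
  exact ⟨x, (hi₀ (hx 0)).2, mem_iInter.2 fun n => (hnext_sub (c n) n (hx (n + 1))).2⟩

theorem Ultrafilter.continuous_map {α β : Type*} (F : α → β) : Continuous (Ultrafilter.map F) :=
  ultrafilterBasis_is_basis.continuous_iff.2 <| by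
    rintro _ ⟨s, rfl⟩
    exact ultrafilter_isOpen_basic (F ⁻¹' s)

theorem Ultrafilter.le_cofinite_iff_notMem_range_pure {α : Type*} (u : Ultrafilter α) :
    (u : Filter α) ≤ cofinite ↔ u ∉ range pure := by
  refine ⟨?_, fun h => u.le_cofinite_or_eq_pure.resolve_right fun ⟨a, ha⟩ => h ⟨a, ha.symm⟩⟩
  rintro hu ⟨a, rfl⟩
  exact hu (finite_singleton a).compl_mem_cofinite rfl

abbrev FreeUltrafilter (α : Type*) : Type _ := {u : Ultrafilter α // (u : Filter α) ≤ cofinite}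

namespace FreeUltrafilter

variable {α : Type*}

def basic (a : Set α) : Set (FreeUltrafilter α) := {u | a ∈ u.1}

theorem isClopen_basic (a : Set α) : IsClopen (basic a) :=
  ⟨(ultrafilter_isClosed_basic a).preimage continuous_subtype_val,
    (ultrafilter_isOpen_basic a).preimage continuous_subtype_val⟩

theorem basic_univ : basic (univ : Set α) = univ :=
  eq_univ_of_forall fun u => u.1.univ_mem

theorem basic_inter (a b : Set α) : basic (a ∩ b) = basic a ∩ basic b :=
  ext fun _ => inter_mem_iff

theorem basic_union (a b : Set α) : basic (a ∪ b) = basic a ∪ basic b :=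
  ext fun _ => Ultrafilter.union_mem_iff

theorem basic_nonempty_iff {a : Set α} : (basic a).Nonempty ↔ a.Infinite := by
  refine ⟨fun ⟨u, hu⟩ ha => compl_notMem hu (u.2 ha.compl_mem_cofinite), fun ha => ?_⟩
  have : (cofinite ⊓ 𝓟 a).NeBot := frequently_iff_neBot.1 (frequently_cofinite_iff_infinite.2 ha)
  have hu := Ultrafilter.of_le (cofinite ⊓ 𝓟 a)
  exact ⟨⟨_, hu.trans inf_le_left⟩, hu.trans inf_le_right (mem_principal_self a)⟩

instance : CompactSpace (FreeUltrafilter α) := by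
  have : {u : Ultrafilter α | (u : Filter α) ≤ cofinite} = ⋂ s ∈ cofinite, {u | s ∈ u} := by
    ext u
    simp [Filter.le_def]
  refine isCompact_iff_compactSpace.1
    (IsClosed.isCompact (s := {u : Ultrafilter α | (u : Filter α) ≤ cofinite}) ?_)
  rw [this]
  exact isClosed_biInter fun s _ => ultrafilter_isClosed_basic s

theorem exists_basic_mem_subset {U : Set (FreeUltrafilter α)} (hU : IsOpen U)
    {u : FreeUltrafilter α} (hu : u ∈ U) : ∃ a, u ∈ basic a ∧ basic a ⊆ U := by
  obtain ⟨O, hO, rfl⟩ := isOpen_induced_iff.1 hU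
  obtain ⟨_, ⟨a, rfl⟩, hua, haO⟩ := ultrafilterBasis_is_basis.exists_subset_of_mem_open hu hO
  exact ⟨a, hua, fun v hv => haO hv⟩

theorem exists_basic_between {K U : Set (FreeUltrafilter α)} (hK : IsCompact K) (hU : IsOpen U)
    (hKU : K ⊆ U) : ∃ a, K ⊆ basic a ∧ basic a ⊆ U := by
  refine hK.induction_on ⟨∅, empty_subset _, fun u hu => absurd hu u.1.empty_notMem⟩
    (fun s t hst ⟨a, hta, haU⟩ => ⟨a, hst.trans hta, haU⟩)
    (fun s t ⟨a, hsa, haU⟩ ⟨b, htb, hbU⟩ =>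
      ⟨a ∪ b, basic_union a b ▸ union_subset_union hsa htb,
        basic_union a b ▸ union_subset haU hbU⟩)
    fun u hu => ?_
  obtain ⟨a, hua, haU⟩ := exists_basic_mem_subset hU (hKU hu)
  exact ⟨basic a, mem_nhdsWithin_of_mem_nhds ((isClopen_basic a).isOpen.mem_nhds hua),
    a, subset_rfl, haU⟩

theorem exists_basic_eq_of_isClopen {C : Set (FreeUltrafilter α)} (hC : IsClopen C) :
    ∃ a, basic a = C :=
  let ⟨a, hCa, haC⟩ := exists_basic_between hC.isClosed.isCompact hC.isOpen subset_rfl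
  ⟨a, haC.antisymm hCa⟩

def map {β : Type*} (F : α → β) (hF : Tendsto F cofinite cofinite) :
    C(FreeUltrafilter α, FreeUltrafilter β) where
  toFun u := ⟨u.1.map F, (map_mono u.2).trans hF⟩
  continuous_toFun := ((Ultrafilter.continuous_map F).comp continuous_subtype_val).subtype_mk _

theorem mapsTo_map_basic {β : Type*} {F : α → β} (hF : Tendsto F cofinite cofinite) {a : Set α}
    {b : Set β} (h : (a \ F ⁻¹' b).Finite) : MapsTo (map F hF) (basic a) (basic b) :=
  fun u hu => mem_of_superset (inter_mem hu (u.2 h.compl_mem_cofinite))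
    fun _ ⟨hka, hk⟩ => by_contra fun hkb => hk ⟨hka, hkb⟩

structure MapCondition (α : Type*) where
  ι : Type
  [finite : Finite ι]
  piece : ι → Set α
  target : ι → Set α
  pairwise_disjoint : Pairwise (Disjoint on piece)
  cover : ∀ x, ∃ i, x ∈ piece i
  infinite_target : ∀ i, (target i).Infinite

attribute [instance] MapCondition.finite

namespace MapCondition

def maps (K : MapCondition α) : Set C(FreeUltrafilter α, FreeUltrafilter α) :=
  {h | ∀ i, MapsTo h (basic (K.piece i)) (basic (K.target i))}

instance : Preorder (MapCondition α) where
  le K' K := ∀ j, ∃ i, K'.piece j ⊆ K.piece i ∧ K'.target j ⊆ K.target i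
  le_refl K j := ⟨j, subset_rfl, subset_rfl⟩
  le_trans K₁ K₂ K₃ h₁₂ h₂₃ j :=
    let ⟨i, hp, ht⟩ := h₁₂ j
    let ⟨l, hp', ht'⟩ := h₂₃ i
    ⟨l, hp.trans hp', ht.trans ht'⟩

instance [Infinite α] : OrderTop (MapCondition α) where
  top :=
    { ι := Unit
      piece := fun _ => univ
      target := fun _ => univ
      pairwise_disjoint := fun i j hij => (hij (Subsingleton.elim i j)).elim
      cover := fun _ => ⟨(), mem_univ _⟩
      infinite_target := fun _ => infinite_univ }
  le_top _ _ := ⟨(), subset_univ _, subset_univ _⟩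

theorem maps_top [Infinite α] : (⊤ : MapCondition α).maps = univ :=
  eq_univ_of_forall fun _ _ _ _ => univ_mem

theorem isOpen_maps (K : MapCondition α) : IsOpen K.maps := by
  simp only [maps, ofPred_forall]
  exact isOpen_iInter_of_finite fun i => ContinuousMap.isOpen_setOfPred_mapsTo
    (isClopen_basic _).isClosed.isCompact (isClopen_basic _).isOpen

variable {K L : MapCondition α}

theorem eq_of_mem_piece {x : α} {i j : K.ι} (hi : x ∈ K.piece i) (hj : x ∈ K.piece j) : i = j :=
  K.pairwise_disjoint.eq (not_disjoint_iff.2 ⟨x, hi, hj⟩)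

theorem exists_basic_piece_mem (K : MapCondition α) (u : FreeUltrafilter α) :
    ∃ i, u ∈ basic (K.piece i) :=
  Ultrafilter.eventually_exists_iff.1 (Eventually.of_forall K.cover)

theorem eq_of_mem_basic_piece {u : FreeUltrafilter α} {i j : K.ι} (hi : u ∈ basic (K.piece i))
    (hj : u ∈ basic (K.piece j)) : i = j :=
  let ⟨_, hxi, hxj⟩ := u.1.nonempty_of_mem (inter_mem hi hj)
  eq_of_mem_piece hxi hxj

theorem target_subset_of_le {K' : MapCondition α} (h : K' ≤ K) {x : α} {i : K.ι} {j : K'.ι}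
    (hj : x ∈ K'.piece j) (hi : x ∈ K.piece i) : K'.target j ⊆ K.target i :=
  let ⟨_, hp, ht⟩ := h j
  eq_of_mem_piece (hp hj) hi ▸ ht

def ofMapsTo [Infinite α] (a b : Set α) (hb : b.Infinite) : MapCondition α where
  ι := Bool
  piece i := if i then a else aᶜ
  target i := if i then b else univ
  pairwise_disjoint i j hij := by
    cases i <;> cases j <;> simp_all [onFun, disjoint_compl_left, disjoint_compl_right]
  cover x := by by_cases hx : x ∈ a; exacts [⟨true, by simpa⟩, ⟨false, by simpa⟩]
  infinite_target i := by cases i; exacts [infinite_univ, hb]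

theorem maps_ofMapsTo [Infinite α] (a b : Set α) (hb : b.Infinite) :
    (ofMapsTo a b hb).maps =
      {h : C(FreeUltrafilter α, FreeUltrafilter α) | MapsTo h (basic a) (basic b)} := by
  ext h
  simp [maps, ofMapsTo, Bool.forall_bool, basic_univ]

open scoped Classical in
def inter (K L : MapCondition α) : MapCondition α where
  ι := K.ι × L.ι
  piece p := K.piece p.1 ∩ L.piece p.2
  -- The fallback target is only used on pieces that no map of `K.maps ∩ L.maps` meets.
  target p := if (K.target p.1 ∩ L.target p.2).Infinite then K.target p.1 ∩ L.target p.2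
    else K.target p.1
  pairwise_disjoint p q hpq := by
    rcases eq_or_ne p.1 q.1 with h₁ | h₁
    · have h₂ : p.2 ≠ q.2 := fun h₂ => hpq (Prod.ext h₁ h₂)
      exact (L.pairwise_disjoint h₂).mono inter_subset_right inter_subset_right
    · exact (K.pairwise_disjoint h₁).mono inter_subset_left inter_subset_left
  cover x :=
    let ⟨i, hi⟩ := K.cover x
    let ⟨j, hj⟩ := L.cover x
    ⟨(i, j), hi, hj⟩
  infinite_target p := by
    split_ifs with h
    exacts [h, K.infinite_target _]

theorem piece_inter (p : (K.inter L).ι) : (K.inter L).piece p = K.piece p.1 ∩ L.piece p.2 :=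
  rfl

theorem inter_le (K L : MapCondition α) : K.inter L ≤ K := fun p =>
  ⟨p.1, inter_subset_left, by dsimp only [inter]; split_ifs; exacts [inter_subset_left, subset_rfl]⟩

section inter

variable {g : C(FreeUltrafilter α, FreeUltrafilter α)} (hK : g ∈ K.maps) (hL : g ∈ L.maps)
include hK hL

theorem mapsTo_piece_inter (p : (K.inter L).ι) :
    MapsTo g (basic ((K.inter L).piece p)) (basic (K.target p.1 ∩ L.target p.2)) := by
  rw [piece_inter, basic_inter, basic_inter]
  exact (hK p.1).inter_inter (hL p.2)

theorem inter_target_eq {p : (K.inter L).ι} {u : FreeUltrafilter α}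
    (hu : u ∈ basic ((K.inter L).piece p)) :
    (K.inter L).target p = K.target p.1 ∩ L.target p.2 :=
  if_pos (basic_nonempty_iff.1 ⟨g u, mapsTo_piece_inter hK hL p hu⟩)

theorem mem_maps_inter : g ∈ (K.inter L).maps := fun p _ hu =>
  inter_target_eq hK hL hu ▸ mapsTo_piece_inter hK hL p hu

theorem maps_inter_subset : (K.inter L).maps ⊆ K.maps ∩ L.maps := by
  intro h hh
  have hmem (u : FreeUltrafilter α) : ∃ p : K.ι × L.ι,
      u ∈ basic (K.piece p.1) ∩ basic (L.piece p.2) ∧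
        h u ∈ basic (K.target p.1) ∩ basic (L.target p.2) := by
    obtain ⟨p, hp⟩ := (K.inter L).exists_basic_piece_mem u
    refine ⟨p, by rwa [← basic_inter], ?_⟩
    rw [← basic_inter, ← inter_target_eq hK hL hp]
    exact hh p hp
  refine ⟨fun i u hu => ?_, fun j u hu => ?_⟩ <;> obtain ⟨p, hup, hhu⟩ := hmem u
  · exact eq_of_mem_basic_piece hup.1 hu ▸ hhu.1
  · exact eq_of_mem_basic_piece hup.2 hu ▸ hhu.2

end inter

variable [Infinite α]

theorem exists_mem_maps_subset_mapsTo {g : C(FreeUltrafilter α, FreeUltrafilter α)}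
    {C U : Set (FreeUltrafilter α)} (hC : IsCompact C) (hU : IsOpen U) (hg : MapsTo g C U) :
    ∃ L : MapCondition α, g ∈ L.maps ∧ L.maps ⊆ {f | MapsTo f C U} := by
  obtain ⟨b, hCb, hbU⟩ :=
    exists_basic_between (hC.image g.continuous) hU (mapsTo_iff_image_subset.1 hg)
  obtain ⟨a, ha⟩ := exists_basic_eq_of_isClopen ((isClopen_basic b).preimage g.continuous)
  rcases b.finite_or_infinite with hb | hb
  · refine ⟨⊤, by rw [maps_top]; exact mem_univ g, fun f _ u hu => ?_⟩
    exact absurd ⟨g u, hCb ⟨u, hu, rfl⟩⟩ (basic_nonempty_iff.not.2 hb.not_infinite)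
  · refine ⟨ofMapsTo a b hb, ?_, ?_⟩ <;> rw [maps_ofMapsTo, ha]
    · exact mapsTo_preimage g _
    · exact fun f hf u hu => hbU (hf (hCb ⟨u, hu, rfl⟩))

theorem hasBasis_nhds (g : C(FreeUltrafilter α, FreeUltrafilter α)) :
    (𝓝 g).HasBasis (fun K : MapCondition α => g ∈ K.maps) maps := by
  have hbasis :=
    hasBasis_biInf_principal' (p := fun K : MapCondition α => g ∈ K.maps) (s := maps)
    (fun K hK L hL => ⟨K.inter L, mem_maps_inter hK hL, (maps_inter_subset hK hL).trans
      inter_subset_left, (maps_inter_subset hK hL).trans inter_subset_right⟩)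
    ⟨⊤, by rw [maps_top]; exact mem_univ g⟩
  convert hbasis
  refine le_antisymm (le_iInf₂ fun K hK => le_principal_iff.2 ((isOpen_maps K).mem_nhds hK)) ?_
  rw [ContinuousMap.nhds_compactOpen]
  refine le_iInf₂ fun C hC => le_iInf₂ fun U hU => le_iInf fun hgCU => ?_
  obtain ⟨L, hgL, hL⟩ := exists_mem_maps_subset_mapsTo hC hU hgCU
  exact le_principal_iff.2 (hbasis.mem_iff.2 ⟨L, hgL, hL⟩)

theorem exists_le_maps_subset (K : MapCondition α)
    {V : Set C(FreeUltrafilter α, FreeUltrafilter α)} (hV : IsOpen V)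
    (hKV : (K.maps ∩ V).Nonempty) : ∃ K' ≤ K, K'.maps ⊆ K.maps ∩ V := by
  obtain ⟨g, hgK, hgV⟩ := hKV
  obtain ⟨L, hgL, hLV⟩ := (hasBasis_nhds g).mem_iff.1 (hV.mem_nhds hgV)
  exact ⟨K.inter L, inter_le K L, fun h hh =>
    ⟨(maps_inter_subset hgK hgL hh).1, hLV (maps_inter_subset hgK hgL hh).2⟩⟩

end MapCondition

open MapCondition

theorem iInter_maps_nonempty (K : ℕ → MapCondition ℕ) (hK : Antitone K) :
    (⋂ n, (K n).maps).Nonempty := by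
  choose i hi using fun k => (K k).cover k
  choose F hF hlt using fun k => ((K k).infinite_target (i k)).exists_gt k
  have hF_tendsto : Tendsto F cofinite cofinite := by
    rw [Nat.cofinite_eq_atTop]
    exact tendsto_atTop_mono (fun k => (hlt k).le) tendsto_id
  refine ⟨map F hF_tendsto, mem_iInter.2 fun n j => mapsTo_map_basic hF_tendsto ?_⟩
  refine (finite_Iio n).subset fun k ⟨hk, hFk⟩ => mem_Iio.2 <| lt_of_not_ge fun hnk => hFk ?_
  exact target_subset_of_le (hK hnk) (hi k) hk (hF k)

instance baireSpace_continuousMap : BaireSpace C(FreeUltrafilter ℕ, FreeUltrafilter ℕ) :=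
  .of_iInter_antitone_nonempty maps isOpen_maps maps_top
    (fun K _ hV hKV => exists_le_maps_subset K hV hKV) iInter_maps_nonempty

end FreeUltrafilter

noncomputable def Ultrafilter.homeomorphStoneCech (α : Type*) [TopologicalSpace α]
    [DiscreteTopology α] :
    Ultrafilter α ≃ₜ StoneCech α where
  toFun := Ultrafilter.extend stoneCechUnit
  invFun := stoneCechExtend (continuous_of_discreteTopology (f := pure))
  left_inv := congrFun <| denseRange_pure.equalizer
    ((continuous_stoneCechExtend _).comp (continuous_ultrafilter_extend _)) continuous_id <|
      funext fun a => by simp [stoneCechExtend_stoneCechUnit]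
  right_inv := congrFun <| stoneCech_hom_ext
    ((continuous_ultrafilter_extend _).comp (continuous_stoneCechExtend _)) continuous_id <|
      funext fun a => by simp [stoneCechExtend_stoneCechUnit]
  continuous_toFun := continuous_ultrafilter_extend _
  continuous_invFun := continuous_stoneCechExtend _

noncomputable def FreeUltrafilter.homeomorphOmegaStar : FreeUltrafilter ℕ ≃ₜ OmegaStar :=
  (Ultrafilter.homeomorphStoneCech ℕ).subtype fun u => by
    rw [Ultrafilter.le_cofinite_iff_notMem_range_pure, not_iff_not,
      ← (Ultrafilter.homeomorphStoneCech ℕ).injective.mem_set_image, ← range_comp,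
      show ⇑(Ultrafilter.homeomorphStoneCech ℕ) ∘ pure = stoneCechUnit from
      funext (ultrafilter_extend_pure _)]

/-- `C_k(ω*, ω*)`, the space of continuous self-maps of `ω*` with the compact-open topology
(the default topology on `C(ω*, ω*)` in Mathlib), is a Baire space. -/
theorem baireSpace_continuousMaps_omegaStar : BaireSpace C(OmegaStar, OmegaStar) :=
  (FreeUltrafilter.homeomorphOmegaStar.arrowCongr FreeUltrafilter.homeomorphOmegaStar).baireSpace
end

section
/- The set of all f ∈ C(ω*,ω*) for which there exists an injective map φ : ℕ → ℕ such that f is the restriction to ω* of the Stone–Čech extension βφ (i.e. for every x ∈ ω*, the value of βφ at x, as an element of StoneCech ℕ, lies in ω* and equals f x) is dense in C_k(ω*,ω*). -/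
/-- The Stone–Čech extension `βφ : StoneCech ℕ → StoneCech ℕ` of a map `φ : ℕ → ℕ`. -/
noncomputable def betaExtend (φ : ℕ → ℕ) : StoneCech ℕ → StoneCech ℕ :=
  stoneCechExtend (continuous_stoneCechUnit.comp continuous_of_discreteTopology (f := φ))

/-!
Identify `βℕ` with the space of ultrafilters on `ℕ`, so that `ω*` becomes the space of free
ultrafilters and its basic clopen sets are `A* = {x | A ∈ x}` for `A ⊆ ℕ`. A basic
neighbourhood of `f₀` in `C_k(ω*, ω*)` is given by finitely many conditions `f(Kᵢ) ⊆ Uᵢ`, and by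
compactness these can be sharpened to `Cᵢ* ⊆ f₀⁻¹(Aᵢ*)` with `Kᵢ ⊆ Cᵢ*` and `Aᵢ* ⊆ Uᵢ`. Split `ℕ`
into the finitely many atoms of the Boolean algebra generated by the `Cᵢ`. If an atom `D` is
infinite, pick `x ∈ D*`; then `f₀ x` lies in `Aᵢ*` for every `Cᵢ ⊇ D`, so the intersection of
those `Aᵢ` is infinite. Hence one can choose a strictly increasing `φ` sending each element of an
infinite atom into the corresponding intersection; finite atoms only contribute finitely many
points, which `ω*` does not see, so `βφ` maps each `Cᵢ*` into `Aᵢ*`.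
-/

open Filter Set Topology Function

namespace Ultrafilter

variable {α β : Type*}

theorem continuous_map_s1 (f : α → β) : Continuous (Ultrafilter.map f) :=
  ultrafilterBasis_is_basis.continuous_iff.2 <| by
    rintro _ ⟨A, rfl⟩
    exact ultrafilter_isOpen_basic (f ⁻¹' A)

theorem exists_subset_basic_subset {K W : Set (Ultrafilter α)} (hK : IsCompact K)
    (hW : IsOpen W) (hKW : K ⊆ W) :
    ∃ A : Set α, K ⊆ {u | A ∈ u} ∧ {u | A ∈ u} ⊆ W := by
  let ι := {A : Set α // {u : Ultrafilter α | A ∈ u} ⊆ W}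
  have : Nonempty ι := ⟨⟨∅, fun u hu => (u.empty_notMem hu).elim⟩⟩
  have hcover : K ⊆ ⋃ A : ι, {u | A.1 ∈ u} := fun u hu => by
    obtain ⟨_, ⟨A, rfl⟩, huA, hAW⟩ :=
      ultrafilterBasis_is_basis.exists_subset_of_mem_open (hKW hu) hW
    exact mem_iUnion.2 ⟨⟨A, hAW⟩, huA⟩
  have hdirected : Directed (· ⊆ ·) fun A : ι => {u : Ultrafilter α | A.1 ∈ u} := by
    rintro ⟨A, hA⟩ ⟨B, hB⟩
    refine ⟨⟨A ∪ B, fun u hu => (union_mem_iff.1 hu).elim (@hA u) (@hB u)⟩, ?_, ?_⟩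
    · exact fun u hu => mem_of_superset hu subset_union_left
    · exact fun u hu => mem_of_superset hu subset_union_right
  obtain ⟨⟨A, hAW⟩, hKA⟩ := hK.elim_directed_cover _ (fun _ => ultrafilter_isOpen_basic _)
    hcover hdirected
  exact ⟨A, hKA, hAW⟩

theorem le_cofinite_iff_forall_ne_pure {u : Ultrafilter α} :
    (u : Filter α) ≤ cofinite ↔ ∀ a, u ≠ pure a := by
  refine ⟨?_, fun h => u.le_cofinite_or_eq_pure.resolve_right (not_exists.2 h)⟩
  rintro hu a rfl
  exact (hu (finite_singleton a).compl_mem_cofinite : ({a}ᶜ : Set α) ∈ pure a) rfl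

theorem infinite_of_mem_of_le_cofinite {u : Ultrafilter α} (hu : (u : Filter α) ≤ cofinite)
    {A : Set α} (hA : A ∈ u) : A.Infinite :=
  fun hfin => compl_notMem_iff.2 hA (hu hfin.compl_mem_cofinite)

theorem map_le_cofinite {u : Ultrafilter α} (hu : (u : Filter α) ≤ cofinite) {φ : α → β}
    (hφ : Injective φ) : (u.map φ : Filter β) ≤ cofinite :=
  (map_mono hu).trans hφ.tendsto_cofinite

end Ultrafilter

theorem Set.Infinite.exists_ultrafilter_le_cofinite {α : Type*} {A : Set α} (hA : A.Infinite) :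
    ∃ u : Ultrafilter α, (u : Filter α) ≤ cofinite ∧ A ∈ u := by
  have := cofinite_inf_principal_neBot_iff.2 hA
  exact ⟨Ultrafilter.of _, (Ultrafilter.of_le _).trans inf_le_left,
    Ultrafilter.of_le _ (mem_inf_of_right (mem_principal_self A))⟩

theorem exists_strictMono_eventually_mapsTo {ι : Type*} [Finite ι] (C A : ι → Set ℕ)
    (h : ∀ s : Set ι, {k | {i | k ∈ C i} = s}.Infinite → (⋂ i ∈ s, A i).Infinite) :
    ∃ φ : ℕ → ℕ, StrictMono φ ∧ ∀ i, ∀ᶠ k in cofinite, k ∈ C i → φ k ∈ A i := by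
  set target : ℕ → Set ℕ := fun k => ⋂ i ∈ {i | k ∈ C i}, A i
  have hbad : {k | ¬ (target k).Infinite}.Finite := by
    refine (finite_iUnion fun s : {s : Set ι // ¬ (⋂ i ∈ s, A i).Infinite} =>
      not_infinite.1 (mt (h s) s.2)).subset fun k hk => ?_
    exact mem_iUnion.2 ⟨⟨{i | k ∈ C i}, hk⟩, rfl⟩
  obtain ⟨φ, hφ, hφtarget⟩ := extraction_forall_of_frequently
    (P := fun k n => (target k).Infinite → n ∈ target k) fun k => by
      by_cases hk : (target k).Infinite
      · exact (Nat.frequently_atTop_iff_infinite.2 hk).mono fun _ hn _ => hn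
      · exact Frequently.of_forall fun _ hk' => absurd hk' hk
  refine ⟨φ, hφ, fun i => hbad.eventually_cofinite_notMem.mono fun k hk hki => ?_⟩
  exact mem_iInter₂.1 (hφtarget k (not_not.1 hk)) i hki

section StoneCech

variable (α : Type*) [TopologicalSpace α] [DiscreteTopology α]

noncomputable def stoneCechHomeomorphUltrafilter : StoneCech α ≃ₜ Ultrafilter α where
  toFun := stoneCechExtend (continuous_of_discreteTopology (f := (pure : α → Ultrafilter α)))
  invFun := Ultrafilter.extend stoneCechUnit
  left_inv := congrFun <| stoneCech_hom_ext
    ((continuous_ultrafilter_extend _).comp (continuous_stoneCechExtend _)) continuous_id <|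
    funext fun a => by
      simp [stoneCechExtend_stoneCechUnit continuous_of_discreteTopology, ultrafilter_extend_pure]
  right_inv := congrFun <| denseRange_pure.equalizer
    ((continuous_stoneCechExtend _).comp (continuous_ultrafilter_extend _)) continuous_id <|
    funext fun a => by
      simp [stoneCechExtend_stoneCechUnit continuous_of_discreteTopology, ultrafilter_extend_pure]
  continuous_toFun := continuous_stoneCechExtend _
  continuous_invFun := continuous_ultrafilter_extend _

variable {α}

@[simp]
theorem stoneCechHomeomorphUltrafilter_stoneCechUnit (a : α) :
    stoneCechHomeomorphUltrafilter α (stoneCechUnit a) = pure a :=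
  stoneCechExtend_stoneCechUnit continuous_of_discreteTopology a

theorem notMem_range_stoneCechUnit_iff {x : StoneCech α} :
    x ∉ range stoneCechUnit ↔ (stoneCechHomeomorphUltrafilter α x : Filter α) ≤ cofinite := by
  have hrange : x ∈ range stoneCechUnit ↔ ∃ a, stoneCechHomeomorphUltrafilter α x = pure a := by
    simp_rw [← stoneCechHomeomorphUltrafilter_stoneCechUnit,
      (stoneCechHomeomorphUltrafilter α).injective.eq_iff, mem_range, eq_comm]
  rw [hrange, not_exists, Ultrafilter.le_cofinite_iff_forall_ne_pure]

theorem stoneCechHomeomorphUltrafilter_betaExtend (φ : ℕ → ℕ) (x : StoneCech ℕ) :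
    stoneCechHomeomorphUltrafilter ℕ (betaExtend φ x) =
      (stoneCechHomeomorphUltrafilter ℕ x).map φ :=
  congrFun (stoneCech_hom_ext
    ((stoneCechHomeomorphUltrafilter ℕ).continuous.comp (continuous_stoneCechExtend _))
    ((Ultrafilter.continuous_map_s1 φ).comp (stoneCechHomeomorphUltrafilter ℕ).continuous)
    (funext fun n => by simp [stoneCechExtend_stoneCechUnit])) x

end StoneCech

namespace OmegaStar

noncomputable def toUltrafilter (x : OmegaStar) : Ultrafilter ℕ :=
  stoneCechHomeomorphUltrafilter ℕ x

theorem isInducing_toUltrafilter : IsInducing toUltrafilter :=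
  (stoneCechHomeomorphUltrafilter ℕ).isInducing.comp IsInducing.subtypeVal

theorem toUltrafilter_le_cofinite (x : OmegaStar) : (toUltrafilter x : Filter ℕ) ≤ cofinite :=
  notMem_range_stoneCechUnit_iff.1 x.2

theorem exists_toUltrafilter_eq {u : Ultrafilter ℕ} (hu : (u : Filter ℕ) ≤ cofinite) :
    ∃ x, toUltrafilter x = u :=
  ⟨⟨(stoneCechHomeomorphUltrafilter ℕ).symm u, notMem_range_stoneCechUnit_iff.2 (by simpa)⟩,
    (stoneCechHomeomorphUltrafilter ℕ).apply_symm_apply u⟩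

def basicOpen (A : Set ℕ) : Set OmegaStar := {x | A ∈ toUltrafilter x}

theorem isOpen_basicOpen (A : Set ℕ) : IsOpen (basicOpen A) :=
  (ultrafilter_isOpen_basic A).preimage isInducing_toUltrafilter.continuous

theorem exists_subset_basicOpen_subset {K U : Set OmegaStar} (hK : IsCompact K) (hU : IsOpen U)
    (hKU : K ⊆ U) : ∃ A, K ⊆ basicOpen A ∧ basicOpen A ⊆ U := by
  obtain ⟨W, hW, rfl⟩ := isInducing_toUltrafilter.isOpen_iff.1 hU
  obtain ⟨A, hKA, hAW⟩ := Ultrafilter.exists_subset_basic_subset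
    (hK.image isInducing_toUltrafilter.continuous) hW (image_subset_iff.2 hKU)
  exact ⟨A, image_subset_iff.1 hKA, fun x hx => hAW hx⟩

theorem exists_basicOpen_mapsTo {f : C(OmegaStar, OmegaStar)} {K U : Set OmegaStar}
    (hK : IsCompact K) (hU : IsOpen U) (hfKU : MapsTo f K U) :
    ∃ C A, K ⊆ basicOpen C ∧ MapsTo f (basicOpen C) (basicOpen A) ∧ basicOpen A ⊆ U := by
  obtain ⟨A, hfKA, hAU⟩ :=
    exists_subset_basicOpen_subset (hK.image f.continuous) hU hfKU.image_subset
  obtain ⟨C, hKC, hCA⟩ := exists_subset_basicOpen_subset hK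
    ((isOpen_basicOpen A).preimage f.continuous) (image_subset_iff.1 hfKA)
  exact ⟨C, A, hKC, hCA, hAU⟩

noncomputable def betaMap (φ : ℕ → ℕ) (hφ : Injective φ) : C(OmegaStar, OmegaStar) where
  toFun x := ⟨betaExtend φ x, notMem_range_stoneCechUnit_iff.2 <| by
    rw [stoneCechHomeomorphUltrafilter_betaExtend]
    exact Ultrafilter.map_le_cofinite (toUltrafilter_le_cofinite x) hφ⟩
  continuous_toFun := ((continuous_stoneCechExtend _).comp continuous_subtype_val).subtype_mk _

theorem toUltrafilter_betaMap {φ : ℕ → ℕ} (hφ : Injective φ) (x : OmegaStar) :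
    toUltrafilter (betaMap φ hφ x) = (toUltrafilter x).map φ :=
  stoneCechHomeomorphUltrafilter_betaExtend φ x

theorem infinite_biInter_of_mapsTo {f : OmegaStar → OmegaStar} {ι : Type*} {C A : ι → Set ℕ}
    (hf : ∀ i, MapsTo f (basicOpen (C i)) (basicOpen (A i))) {s : Set ι} (hs_fin : s.Finite)
    (hs : {k | {i | k ∈ C i} = s}.Infinite) : (⋂ i ∈ s, A i).Infinite := by
  obtain ⟨u, hu, hsu⟩ := hs.exists_ultrafilter_le_cofinite
  obtain ⟨x, rfl⟩ := exists_toUltrafilter_eq hu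
  have hfA : ∀ i ∈ s, A i ∈ toUltrafilter (f x) := fun i hi =>
    hf i <| mem_of_superset hsu fun k hk => (hk.symm ▸ hi : i ∈ {i | k ∈ C i})
  exact Ultrafilter.infinite_of_mem_of_le_cofinite (toUltrafilter_le_cofinite (f x))
    ((biInter_mem hs_fin).2 hfA)

theorem exists_betaMap_mapsTo (f : OmegaStar → OmegaStar) {ι : Type*} [Finite ι]
    {C A : ι → Set ℕ} (hf : ∀ i, MapsTo f (basicOpen (C i)) (basicOpen (A i))) :
    ∃ (φ : ℕ → ℕ) (hφ : Injective φ),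
      ∀ i, MapsTo (betaMap φ hφ) (basicOpen (C i)) (basicOpen (A i)) := by
  obtain ⟨φ, hφ, hφA⟩ := exists_strictMono_eventually_mapsTo C A fun s =>
    infinite_biInter_of_mapsTo hf (toFinite s)
  refine ⟨φ, hφ.injective, fun i x hx => ?_⟩
  change A i ∈ toUltrafilter (betaMap φ hφ.injective x)
  rw [toUltrafilter_betaMap, Ultrafilter.mem_map]
  filter_upwards [hx, toUltrafilter_le_cofinite x (hφA i)] with k hkC hkA using hkA hkC

end OmegaStar

/-- The set of restrictions to `ω*` of Stone–Čech extensions of injective maps `ℕ → ℕ` is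
dense in `C_k(ω*, ω*)`. -/
theorem dense_injective_extensions :
    Dense {f : C(OmegaStar, OmegaStar) |
      ∃ φ : ℕ → ℕ, Function.Injective φ ∧
        ∀ x : OmegaStar, betaExtend φ (x : StoneCech ℕ) = (f x : StoneCech ℕ)} := by
  intro f
  rw [mem_closure_iff_nhds_basis (ContinuousMap.hasBasis_nhds f)]
  rintro S ⟨hS_fin, hS⟩
  have : Finite S := hS_fin.to_subtype
  choose C A hKC hCA hAU using fun KU : S =>
    OmegaStar.exists_basicOpen_mapsTo (hS _ _ KU.2).1 (hS _ _ KU.2).2.1 (hS _ _ KU.2).2.2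
  obtain ⟨φ, hφ, hφCA⟩ := OmegaStar.exists_betaMap_mapsTo f hCA
  refine ⟨OmegaStar.betaMap φ hφ, ⟨φ, hφ, fun x => rfl⟩, mem_iInter₂.2 fun KU hKU => ?_⟩
  exact (hφCA ⟨KU, hKU⟩).mono (hKC ⟨KU, hKU⟩) (hAU ⟨KU, hKU⟩)
end

section
/- Let X be a locally compact Hausdorff totally disconnected (equivalently, zero-dimensional) space. Then for every open set G ⊆ C_k(X,X) and every f ∈ G, there exist n ∈ ℕ and compact clopen subsets A_0, …, A_n, B_0, …, B_n of X such that A_0, …, A_n are pairwise disjoint and f ∈ ⋂_{i=0}^{n} [A_i, B_i] ⊆ G. -/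
/-!
Compact clopen sets form a basis of `X`, so a subbasic neighbourhood `[K, U]` of `f` shrinks to a
neighbourhood `[A, B]` with `K ⊆ A`, `B ⊆ U` compact clopen: take `B` between `f '' K` and `U`,
then `A` between `K` and `f ⁻¹' B`. A finite intersection `⋂ i, [Aᵢ, Bᵢ]` is then rewritten with
pairwise disjoint domains by passing to the Venn regions `A_S` of the `Aᵢ` (the points lying in
`Aᵢ` exactly for `i ∈ S`), paired with `B_S = ⋂ i ∈ S, Bᵢ`.
-/

open Set Filter Topology

section ZeroDimensional

variable {X : Type*} [TopologicalSpace X] [LocallyCompactSpace X] [T2Space X]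
  [TotallyDisconnectedSpace X]

theorem exists_isCompact_isClopen_mem_subset {x : X} {U : Set X} (hU : IsOpen U) (hx : x ∈ U) :
    ∃ V, IsCompact V ∧ IsClopen V ∧ x ∈ V ∧ V ⊆ U := by
  obtain ⟨s, hs, hxs, hsU⟩ := exists_compact_subset hU hx
  obtain ⟨V, hV, hxV, hVs⟩ :=
    loc_compact_Haus_tot_disc_of_zero_dim.mem_nhds_iff.1 (isOpen_interior.mem_nhds hxs)
  have hVs : V ⊆ s := hVs.trans interior_subset
  exact ⟨V, hs.of_isClosed_subset hV.1 hVs, hV, hxV, hVs.trans hsU⟩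

theorem exists_isCompact_isClopen_between {K U : Set X} (hK : IsCompact K) (hU : IsOpen U)
    (hKU : K ⊆ U) : ∃ V, IsCompact V ∧ IsClopen V ∧ K ⊆ V ∧ V ⊆ U := by
  choose! V hVc hVcl hxV hVU using fun x (hx : x ∈ K) ↦
    exists_isCompact_isClopen_mem_subset hU (hKU hx)
  obtain ⟨t, htK, htfin, hKt⟩ := hK.elim_finite_subcover_image
    (fun x hx ↦ (hVcl x hx).isOpen) (fun x hx ↦ mem_biUnion hx (hxV x hx))
  exact ⟨⋃ x ∈ t, V x, htfin.isCompact_biUnion fun x hx ↦ hVc x (htK hx),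
    htfin.isClopen_biUnion fun x hx ↦ hVcl x (htK hx), hKt,
    iUnion₂_subset fun x hx ↦ hVU x (htK hx)⟩

end ZeroDimensional

namespace ContinuousMap

variable {X Y : Type*} [TopologicalSpace X] [LocallyCompactSpace X] [T2Space X]
  [TotallyDisconnectedSpace X] [TopologicalSpace Y] [LocallyCompactSpace Y] [T2Space Y]
  [TotallyDisconnectedSpace Y]

theorem exists_isCompact_isClopen_mapsTo (f : C(X, Y)) {K : Set X} {U : Set Y}
    (hK : IsCompact K) (hU : IsOpen U) (hf : MapsTo f K U) :
    ∃ A B, IsCompact A ∧ IsClopen A ∧ IsCompact B ∧ IsClopen B ∧ K ⊆ A ∧ B ⊆ U ∧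
      MapsTo f A B := by
  obtain ⟨B, hBc, hBcl, hfKB, hBU⟩ :=
    exists_isCompact_isClopen_between (hK.image f.continuous) hU hf.image_subset
  obtain ⟨A, hAc, hAcl, hKA, hAB⟩ :=
    exists_isCompact_isClopen_between hK (hBcl.isOpen.preimage f.continuous)
      (image_subset_iff.1 hfKB)
  exact ⟨A, B, hAc, hAcl, hBc, hBcl, hKA, hBU, hAB⟩

theorem hasBasis_nhds_isCompact_isClopen (f : C(X, Y)) :
    (𝓝 f).HasBasis
      (fun S : Set (Set X × Set Y) ↦ S.Finite ∧ ∀ p ∈ S,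
        IsCompact p.1 ∧ IsClopen p.1 ∧ IsCompact p.2 ∧ IsClopen p.2 ∧ MapsTo f p.1 p.2)
      (⋂ p ∈ ·, {g : C(X, Y) | MapsTo g p.1 p.2}) := by
  refine f.hasBasis_nhds.to_hasBasis (fun S ⟨hSfin, hS⟩ ↦ ?_) fun S ⟨hSfin, hS⟩ ↦
    ⟨S, ⟨hSfin, fun K U hKU ↦ ?_⟩, subset_rfl⟩
  · choose! A B hAc hAcl hBc hBcl hKA hBU hAB using fun p (hp : p ∈ S) ↦
      f.exists_isCompact_isClopen_mapsTo (hS p.1 p.2 hp).1 (hS p.1 p.2 hp).2.1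
        (hS p.1 p.2 hp).2.2
    refine ⟨(fun p ↦ (A p, B p)) '' S, ⟨hSfin.image _, ?_⟩, ?_⟩
    · rintro _ ⟨p, hp, rfl⟩
      exact ⟨hAc p hp, hAcl p hp, hBc p hp, hBcl p hp, hAB p hp⟩
    · simp only [biInter_image, subset_iInter₂_iff]
      exact fun p hp g hg ↦ (mem_iInter₂.1 hg p hp).mono (hKA p hp) (hBU p hp)
  · obtain ⟨hK, -, -, hU, hfKU⟩ := hS _ hKU
    exact ⟨hK, hU.isOpen, hfKU⟩

end ContinuousMap

section VennCell

variable {α β ι : Type*}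

/-- Taken inside `⋃ j, B j` so that `S = ∅` gives a compact set rather than `univ`. -/
def boundedInter (B : ι → Set β) (S : Set ι) : Set β :=
  (⋃ j, B j) ∩ ⋂ j ∈ S, B j

/-- The points lying in `A j` exactly for `j ∈ S`; for `S = ∅` it is empty, not `(⋃ j, A j)ᶜ`. -/
def vennCell (A : ι → Set α) (S : Set ι) : Set α :=
  boundedInter A S ∩ ⋂ j ∈ Sᶜ, (A j)ᶜ

theorem mem_vennCell {A : ι → Set α} {S : Set ι} {x : α} :
    x ∈ vennCell A S ↔ (∃ j, x ∈ A j) ∧ {j | x ∈ A j} = S := by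
  simp only [vennCell, boundedInter, mem_inter_iff, mem_iUnion, mem_iInter, mem_compl_iff,
    Set.ext_iff, mem_ofPred_eq]
  constructor
  · rintro ⟨⟨hx, hS⟩, hSc⟩
    exact ⟨hx, fun j ↦ ⟨fun hj ↦ by_contra fun h ↦ hSc j h hj, hS j⟩⟩
  · rintro ⟨hx, hS⟩
    exact ⟨⟨hx, fun j ↦ (hS j).2⟩, fun j hj hxj ↦ hj ((hS j).1 hxj)⟩

theorem pairwise_disjoint_vennCell (A : ι → Set α) :
    Pairwise (Function.onFun Disjoint (vennCell A)) :=
  fun _ _ hST ↦ disjoint_left.2 fun _ hS hT ↦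
    hST ((mem_vennCell.1 hS).2.symm.trans (mem_vennCell.1 hT).2)

theorem forall_mapsTo_vennCell_iff {A : ι → Set α} {B : ι → Set β} {g : α → β} :
    (∀ S, MapsTo g (vennCell A S) (boundedInter B S)) ↔ ∀ i, MapsTo g (A i) (B i) := by
  constructor
  · intro h i x hx
    have hxS : x ∈ vennCell A {j | x ∈ A j} := mem_vennCell.2 ⟨⟨i, hx⟩, rfl⟩
    exact mem_iInter₂.1 (h _ hxS).2 i hx
  · intro h S x hx
    obtain ⟨⟨i, hxi⟩, rfl⟩ := mem_vennCell.1 hx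
    exact ⟨mem_iUnion.2 ⟨i, h i hxi⟩, mem_iInter₂.2 fun j hj ↦ h j hj⟩

variable [TopologicalSpace α] [Finite ι] {A : ι → Set α}

theorem isClopen_boundedInter (hA : ∀ j, IsClopen (A j)) (S : Set ι) :
    IsClopen (boundedInter A S) :=
  (isClopen_iUnion_of_finite hA).inter (S.toFinite.isClopen_biInter fun j _ ↦ hA j)

theorem isCompact_boundedInter (hAc : ∀ j, IsCompact (A j)) (hA : ∀ j, IsClosed (A j))
    (S : Set ι) : IsCompact (boundedInter A S) :=
  (isCompact_iUnion hAc).inter_right (isClosed_biInter fun j _ ↦ hA j)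

theorem isClopen_vennCell (hA : ∀ j, IsClopen (A j)) (S : Set ι) : IsClopen (vennCell A S) :=
  (isClopen_boundedInter hA S).inter (Sᶜ.toFinite.isClopen_biInter fun j _ ↦ (hA j).compl)

theorem isCompact_vennCell (hAc : ∀ j, IsCompact (A j)) (hA : ∀ j, IsClopen (A j)) (S : Set ι) :
    IsCompact (vennCell A S) :=
  (isCompact_boundedInter hAc (fun j ↦ (hA j).isClosed) S).of_isClosed_subset
    (isClopen_vennCell hA S).isClosed inter_subset_left

end VennCell

theorem Finite.exists_equiv_fin_succ (α : Type*) [Finite α] [Nonempty α] :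
    ∃ n : ℕ, Nonempty (Fin (n + 1) ≃ α) := by
  obtain ⟨_ | n, ⟨e⟩⟩ := Finite.exists_equiv_fin α
  · exact (e (Classical.arbitrary α)).elim0
  · exact ⟨n, ⟨e.symm⟩⟩

/-- For a locally compact Hausdorff zero-dimensional (totally disconnected) space `X`, the sets
`⋂ i, [Aᵢ, Bᵢ]` with `Aᵢ, Bᵢ` compact clopen and the `Aᵢ` pairwise disjoint form a basis of the
compact-open topology on `C(X, X)`. -/
theorem compactOpen_basis_pairwise_disjoint
    (X : Type*) [TopologicalSpace X] [LocallyCompactSpace X] [T2Space X]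
    [TotallyDisconnectedSpace X]
    (G : Set C(X, X)) (hG : IsOpen G) (f : C(X, X)) (hf : f ∈ G) :
    ∃ (n : ℕ) (A B : Fin (n + 1) → Set X),
      (∀ i, IsCompact (A i) ∧ IsClopen (A i)) ∧
      (∀ i, IsCompact (B i) ∧ IsClopen (B i)) ∧
      Pairwise (Function.onFun Disjoint A) ∧
      f ∈ ⋂ i, {g : C(X, X) | (g : X → X) '' A i ⊆ B i} ∧
      (⋂ i, {g : C(X, X) | (g : X → X) '' A i ⊆ B i}) ⊆ G := by
  obtain ⟨S, ⟨hSfin, hS⟩, hSG⟩ :=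
    f.hasBasis_nhds_isCompact_isClopen.mem_iff.1 (hG.mem_nhds hf)
  have := hSfin.to_subtype
  obtain ⟨n, ⟨e⟩⟩ := Finite.exists_equiv_fin_succ (Set S)
  let A (p : S) : Set X := p.1.1
  let B (p : S) : Set X := p.1.2
  have hA (p : S) : IsCompact (A p) ∧ IsClopen (A p) := ⟨(hS p p.2).1, (hS p p.2).2.1⟩
  have hB (p : S) : IsCompact (B p) ∧ IsClopen (B p) := ⟨(hS p p.2).2.2.1, (hS p p.2).2.2.2.1⟩
  have hmem (g : C(X, X)) :
      g ∈ ⋂ i, {g : C(X, X) | (g : X → X) '' vennCell A (e i) ⊆ boundedInter B (e i)} ↔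
        g ∈ ⋂ p ∈ S, {g : C(X, X) | MapsTo g p.1 p.2} := by
    simp only [mem_iInter, mem_ofPred_eq, ← mapsTo_iff_image_subset]
    rw [← e.surjective.forall (p := fun T ↦ MapsTo g (vennCell A T) (boundedInter B T)),
      forall_mapsTo_vennCell_iff, Subtype.forall]
  refine ⟨n, vennCell A ∘ e, boundedInter B ∘ e,
    fun i ↦ ⟨isCompact_vennCell (fun p ↦ (hA p).1) (fun p ↦ (hA p).2) _,
      isClopen_vennCell (fun p ↦ (hA p).2) _⟩,
    fun i ↦ ⟨isCompact_boundedInter (fun p ↦ (hB p).1) (fun p ↦ (hB p).2.isClosed) _,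
      isClopen_boundedInter (fun p ↦ (hB p).2) _⟩,
    (pairwise_disjoint_vennCell A).comp_of_injective e.injective,
    (hmem f).2 (mem_iInter₂.2 fun p hp ↦ (hS p hp).2.2.2.2), fun g hg ↦ hSG ((hmem g).1 hg)⟩
end

section
/- Let X be an infinite compact Hausdorff totally disconnected (equivalently, zero-dimensional) space. Then C_k(X,X) is not pseudocompact: there exists a continuous real-valued function F : C_k(X,X) → ℝ that is unbounded, i.e. there is no M with |F f| ≤ M for all f ∈ C(X,X). -/
/-!
Fix a clopen set `U ⊆ X` and points `a ∈ U`, `b ∉ U`. The map `f ↦ f⁻¹(U)` from `C_k(X, X)` to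
the clopen subsets of `X` is locally constant, because `X` is compact and the fibre over `S` is
`{g | g(S) ⊆ U, g(Sᶜ) ⊆ Uᶜ}`; it is onto, since `S` is the preimage of `U` under the map that is
`a` on `S` and `b` off `S`. An infinite totally separated space has infinitely many clopen sets,
so composing with a surjection of them onto `ℕ` gives an unbounded continuous function.
-/

open Set TopologicalSpace

theorem Set.preimage_eq_iff_mapsTo_and_mapsTo_compl {X Y : Type*} {f : X → Y} {S : Set X}
    {U : Set Y} : f ⁻¹' U = S ↔ MapsTo f S U ∧ MapsTo f Sᶜ Uᶜ :=
  ⟨fun h => ⟨h.ge, fun _ hx hfx => hx (h.le hfx)⟩,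
    fun ⟨hS, hSc⟩ => Set.ext fun _ => hS.mem_iff hSc⟩

namespace TopologicalSpace.Clopens

instance infinite {X : Type*} [TopologicalSpace X] [TotallySeparatedSpace X] [Infinite X] :
    Infinite (Clopens X) := by
  have separate : Function.Injective fun x : X => {S : Clopens X | x ∈ S} := by
    intro x y hxy
    by_contra hne
    obtain ⟨S, hS, hxS, hyS⟩ := exists_isClopen_of_totally_separated hne
    exact hyS ((Set.ext_iff.mp hxy ⟨S, hS⟩).mp hxS)
  by_contra hfin
  have := not_infinite_iff_finite.mp hfin
  exact (Finite.of_injective _ separate).false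

end TopologicalSpace.Clopens

namespace ContinuousMap

variable {X Y : Type*} [TopologicalSpace X] [TopologicalSpace Y] {U : Set Y}

def clopenPreimage (hU : IsClopen U) (f : C(X, Y)) : Clopens X :=
  ⟨f ⁻¹' U, hU.preimage f.continuous⟩

@[simp]
theorem coe_clopenPreimage (hU : IsClopen U) (f : C(X, Y)) :
    (clopenPreimage hU f : Set X) = f ⁻¹' U :=
  rfl

theorem isLocallyConstant_clopenPreimage [CompactSpace X] (hU : IsClopen U) :
    IsLocallyConstant (clopenPreimage hU : C(X, Y) → Clopens X) := by
  refine IsLocallyConstant.iff_isOpen_fiber.mpr fun S => ?_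
  have fiber_eq : clopenPreimage hU ⁻¹' {S} =
      {g : C(X, Y) | MapsTo g S U} ∩ {g : C(X, Y) | MapsTo g (S : Set X)ᶜ Uᶜ} := by
    ext g
    simp only [mem_preimage, mem_singleton_iff, Clopens.ext_iff, coe_clopenPreimage,
      mem_inter_iff, mem_ofPred_eq]
    exact preimage_eq_iff_mapsTo_and_mapsTo_compl
  rw [fiber_eq]
  exact (isOpen_setOfPred_mapsTo S.isClosed.isCompact hU.isOpen).inter
    (isOpen_setOfPred_mapsTo S.isClopen.compl.isClosed.isCompact hU.compl.isOpen)

theorem clopenPreimage_surjective (hU : IsClopen U) {a b : Y} (ha : a ∈ U) (hb : b ∉ U) :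
    Function.Surjective (clopenPreimage hU : C(X, Y) → Clopens X) := by
  classical
  intro S
  have hfrontier : ∀ x ∈ frontier (S : Set X), a = b := by
    simp [S.isClopen.frontier_eq]
  let f : C(X, Y) :=
    ⟨(S : Set X).piecewise (fun _ => a) (fun _ => b),
      continuous_const.piecewise hfrontier continuous_const⟩
  refine ⟨f, Clopens.ext ?_⟩
  rw [coe_clopenPreimage, preimage_eq_iff_mapsTo_and_mapsTo_compl]
  refine ⟨fun x hx => ?_, fun x hx => ?_⟩
  · simpa [f, hx] using ha
  · simpa [f, piecewise_eq_of_notMem _ _ _ hx] using hb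

end ContinuousMap

open ContinuousMap in
/-- For an infinite compact Hausdorff zero-dimensional (totally disconnected) space `X`, the
space `C_k(X, X)` is not pseudocompact: there is an unbounded continuous real-valued function
on `C_k(X, X)`. -/
theorem continuousMaps_not_pseudocompact
    (X : Type*) [TopologicalSpace X] [CompactSpace X] [T2Space X]
    [TotallyDisconnectedSpace X] [Infinite X] :
    ∃ F : C(X, X) → ℝ, Continuous F ∧ ¬∃ M : ℝ, ∀ f : C(X, X), |F f| ≤ M := by
  obtain ⟨a, b, hab⟩ := exists_pair_ne X
  obtain ⟨U, hU, haU, hbU⟩ := exists_isClopen_of_totally_separated hab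
  let index : Clopens X → ℕ := Function.invFun (Infinite.natEmbedding (Clopens X))
  have index_surjective : Function.Surjective index :=
    Function.invFun_surjective (Infinite.natEmbedding _).injective
  refine ⟨fun f => index (clopenPreimage hU f),
    ((isLocallyConstant_clopenPreimage hU).comp fun S => (index S : ℝ)).continuous, ?_⟩
  rintro ⟨M, hM⟩
  obtain ⟨n, hn⟩ := exists_nat_gt M
  obtain ⟨f, hf⟩ := (index_surjective.comp (clopenPreimage_surjective hU haU hbU)) n
  have : (n : ℝ) ≤ M := by simpa [← hf] using (le_abs_self _).trans (hM f)
  linarith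
end

section
/- Let X be an infinite compact Hausdorff totally disconnected (equivalently, zero-dimensional) space. Then there exist two disjoint subsets U and V of C_k(X,X), each of which is a union of countably many clopen subsets of C_k(X,X) (hence each is an open Fσ cozero-set), such that the identity map of X belongs to both the closure of U and the closure of V. In particular, C_k(X,X) is not an F-space. -/
/-!
Take pairwise disjoint nonempty clopen sets `C n ⊆ X`, let `Y` be the closure of their union and
let `D N ⊆ C_k(X, X)` be the clopen set of maps sending `Y` into `C 0 ∪ ⋯ ∪ C N`. Put `U`, `V` the
unions of the odd, resp. even, differences `D (N + 1) \ D N`. Every neighbourhood of the identity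
contains all maps preserving the fibres of some finite clopen partition of `X`. Such a map in
`D (N + 1) \ D N`, for any large `N`, sends one fibre to a point of `C (N + 1)` in it and every
other fibre meeting `Y` to a point of some `C k` in it. Hence the identity lies in the closure of
both `U` and `V`, and no continuous function is `0` on `U` and `1` on `V`.
-/

/-- A cozero-set of a topological space. -/
def IsCozero {Y : Type*} [TopologicalSpace Y] (s : Set Y) : Prop :=
  ∃ g : Y → ℝ, Continuous g ∧ s = {y | g y ≠ 0}

/-- Two sets are completely separated if some continuous real-valued function is `0` on the
first and `1` on the second. -/
def CompletelySeparated {Y : Type*} [TopologicalSpace Y] (A B : Set Y) : Prop :=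
  ∃ h : Y → ℝ, Continuous h ∧ (∀ a ∈ A, h a = 0) ∧ (∀ b ∈ B, h b = 1)

/-- A space is an F-space if any two disjoint cozero-sets are completely separated. -/
def IsFSpace (Y : Type*) [TopologicalSpace Y] : Prop :=
  ∀ A B : Set Y, IsCozero A → IsCozero B → A ∩ B = ∅ → CompletelySeparated A B

open Set Filter Topology Function

section FSpace

variable {Y : Type*} [TopologicalSpace Y]

lemma isCozero_iUnion_of_isClopen {w : ℕ → Set Y} (hw : ∀ n, IsClopen (w n)) :
    IsCozero (⋃ n, w n) := by
  set g : ℕ → Y → ℝ := fun n => (w n).indicator fun _ => (1 / 2 : ℝ) ^ n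
  have hg_nonneg : ∀ n y, 0 ≤ g n y := fun n y =>
    indicator_nonneg (fun _ _ => by positivity) y
  have hg_le : ∀ n y, g n y ≤ (1 / 2) ^ n := fun n y =>
    indicator_le_self' (fun _ _ => by positivity) y
  refine ⟨fun y => ∑' n, g n y,
    continuous_tsum (fun n => (hw n).continuous_indicator continuous_const) summable_geometric_two
      fun n y => by rw [Real.norm_of_nonneg (hg_nonneg n y)]; exact hg_le n y, ?_⟩
  ext y
  simp only [mem_iUnion, mem_ofPred_eq]
  constructor
  · rintro ⟨n, hn⟩
    refine (Summable.tsum_pos (summable_geometric_two.of_nonneg_of_le (hg_nonneg · y)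
      (hg_le · y)) (hg_nonneg · y) n ?_).ne'
    simp [g, hn]
  · intro h
    by_contra! hy
    exact h (by simp [g, hy])

lemma not_isFSpace_of_mem_closure_inter {A B : Set Y} (hA : IsCozero A) (hB : IsCozero B)
    (hAB : A ∩ B = ∅) {p : Y} (hpA : p ∈ closure A) (hpB : p ∈ closure B) : ¬IsFSpace Y := by
  intro hY
  obtain ⟨h, hh, h0, h1⟩ := hY A B hA hB hAB
  have hp0 : h p = 0 := EqOn.closure h0 hh continuous_const hpA
  have hp1 : h p = 1 := EqOn.closure h1 hh continuous_const hpB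
  exact zero_ne_one (hp0.symm.trans hp1)

end FSpace

namespace DiscreteQuotient

variable {X : Type*} [TopologicalSpace X]

def fiberPreservingMaps (S : DiscreteQuotient X) : Set C(X, X) :=
  {f | ∀ x, S.proj (f x) = S.proj x}

lemma fiberPreservingMaps_mono : Monotone (fiberPreservingMaps (X := X)) :=
  fun S T hST f hf x => by simpa only [ofLE_proj] using congrArg (ofLE hST) (hf x)

lemma fiberPreservingMaps_ofIsClopen_subset {A K O : Set X} (hA : IsClopen A) (hKA : K ⊆ A)
    (hAO : A ⊆ O) : fiberPreservingMaps (ofIsClopen hA) ⊆ {f | MapsTo f K O} :=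
  fun _ hf x hx => hAO ((Quotient.eq''.mp (hf x)).mpr (hKA hx))

lemma exists_proj_section_mem_of_mem_closure_iUnion {ι : Type*} [Nonempty ι]
    (S : DiscreteQuotient X) (C : ι → Set X) :
    ∃ (c : S → X) (k : S → ι), (∀ q, S.proj (c q) = q) ∧
      ∀ y ∈ closure (⋃ i, C i), c (S.proj y) ∈ C (k (S.proj y)) := by
  set Z := ⋃ i, C i
  -- the fibres of `S` are open, so those meeting `closure Z` already meet `Z`
  have hclosure : closure Z ⊆ S.proj ⁻¹' (S.proj '' Z) :=
    closure_minimal (subset_preimage_image _ _) (S.isClosed_preimage _)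
  have hrep : ∀ q : S, ∃ (k : ι) (c : X), S.proj c = q ∧ (q ∈ S.proj '' Z → c ∈ C k) := by
    intro q
    by_cases hq : q ∈ S.proj '' Z
    · obtain ⟨c, hcZ, rfl⟩ := hq
      obtain ⟨k, hck⟩ := mem_iUnion.mp hcZ
      exact ⟨k, c, rfl, fun _ => hck⟩
    · obtain ⟨c, rfl⟩ := S.proj_surjective q
      exact ⟨Classical.arbitrary ι, c, rfl, fun h => absurd h hq⟩
  choose k c hc_proj hc_mem using hrep
  exact ⟨c, k, hc_proj, fun y hy => hc_mem _ (hclosure hy)⟩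

variable [CompactSpace X] [T2Space X] [TotallyDisconnectedSpace X]

lemma iInf_principal_fiberPreservingMaps_le_nhds_id :
    ⨅ S : DiscreteQuotient X, 𝓟 (fiberPreservingMaps S) ≤ 𝓝 (ContinuousMap.id X) := by
  rw [ContinuousMap.nhds_compactOpen]
  refine le_iInf₂ fun K hK => le_iInf₂ fun O hO => le_iInf fun hKO => ?_
  obtain ⟨A, hA, hKA, hAO⟩ := exists_clopen_of_closed_subset_open hK.isClosed hO hKO
  exact iInf_le_of_le (ofIsClopen hA)
    (principal_mono.mpr (fiberPreservingMaps_ofIsClopen_subset hA hKA hAO))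

lemma exists_fiberPreservingMaps_subset_of_mem_nhds_id {t : Set C(X, X)}
    (ht : t ∈ 𝓝 (ContinuousMap.id X)) : ∃ S : DiscreteQuotient X, fiberPreservingMaps S ⊆ t :=
  (mem_iInf_of_directed (monotone_principal.comp fiberPreservingMaps_mono).directed_ge t).mp
    (iInf_principal_fiberPreservingMaps_le_nhds_id ht)

end DiscreteQuotient

open DiscreteQuotient

lemma exists_pairwise_disjoint_isClopen_nonempty (X : Type*) [TopologicalSpace X]
    [CompactSpace X] [T2Space X] [TotallyDisconnectedSpace X] [Infinite X] :
    ∃ C : ℕ → Set X, (∀ n, IsClopen (C n)) ∧ (∀ n, (C n).Nonempty) ∧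
      Pairwise (Disjoint on C) := by
  obtain ⟨U, hU_inf, hU_open, hU_disj⟩ := exists_seq_infinite_isOpen_pairwise_disjoint X
  have hC : ∀ n, ∃ C : Set X, IsClopen C ∧ C.Nonempty ∧ C ⊆ U n := fun n => by
    obtain ⟨x, hx⟩ := (hU_inf n).nonempty
    obtain ⟨C, hC, hxC, hCU⟩ := compact_exists_isClopen_in_isOpen (hU_open n) hx
    exact ⟨C, hC, ⟨x, hxC⟩, hCU⟩
  choose C hC_clopen hC_ne hCU using hC
  exact ⟨C, hC_clopen, hC_ne, fun m n hmn => (hU_disj hmn).mono (hCU m) (hCU n)⟩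

section LevelMaps

variable {X : Type*} [TopologicalSpace X] (C : ℕ → Set X)

def sublevelMaps (N : ℕ) : Set C(X, X) :=
  {f | MapsTo f (closure (⋃ n, C n)) (accumulate C N)}

def levelMaps (N : ℕ) : Set C(X, X) :=
  sublevelMaps C (N + 1) \ sublevelMaps C N

lemma monotone_sublevelMaps : Monotone (sublevelMaps C) :=
  fun _ _ hMN _ hf => hf.mono_right (monotone_accumulate hMN)

lemma pairwise_disjoint_levelMaps : Pairwise (Disjoint on levelMaps C) :=
  (pairwise_disjoint_on _).mpr fun _ _ hmn =>
    disjoint_left.mpr fun _ hm hn => hn.2 (monotone_sublevelMaps C hmn hm.1)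

variable [CompactSpace X]

lemma isClopen_sublevelMaps (hC : ∀ n, IsClopen (C n)) (N : ℕ) :
    IsClopen (sublevelMaps C N) := by
  refine ContinuousMap.isClopen_setOfPred_mapsTo isClosed_closure.isCompact ?_
  rw [accumulate_def]
  exact (finite_Iic N).isClopen_biUnion fun n _ => hC n

lemma isClopen_levelMaps (hC : ∀ n, IsClopen (C n)) (N : ℕ) : IsClopen (levelMaps C N) :=
  (isClopen_sublevelMaps C hC (N + 1)).diff (isClopen_sublevelMaps C hC N)

lemma exists_fiberPreservingMaps_inter_levelMaps_nonempty (hne : ∀ n, (C n).Nonempty)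
    (hdisj : Pairwise (Disjoint on C)) (S : DiscreteQuotient X) :
    ∃ M, ∀ N ≥ M, (fiberPreservingMaps S ∩ levelMaps C N).Nonempty := by
  classical
  obtain ⟨c, k, hc_proj, hc_mem⟩ := S.exists_proj_section_mem_of_mem_closure_iUnion C
  obtain ⟨M, hM⟩ := (finite_range k).bddAbove
  refine ⟨M, fun N hN => ?_⟩
  obtain ⟨x, hx⟩ := hne (N + 1)
  set σ := update c (S.proj x) x
  have hσ : ∀ q, S.proj (σ q) = q := by
    intro q
    rcases eq_or_ne q (S.proj x) with rfl | hq
    · simp [σ]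
    · simp [σ, hq, hc_proj]
  let f : C(X, X) := ⟨σ ∘ S.proj, continuous_of_discreteTopology.comp S.proj_continuous⟩
  have hfx : f x = x := by simp [f, σ]
  refine ⟨f, fun y => hσ _, fun y hy => ?_, fun hf => ?_⟩
  · rcases eq_or_ne (S.proj y) (S.proj x) with hyx | hyx
    · have hfy : f y = x := by simp [f, σ, hyx]
      rw [hfy]
      exact subset_accumulate hx
    · have hfy : f y = c (S.proj y) := by simp [f, σ, hyx]
      rw [hfy, mem_accumulate]
      exact ⟨k (S.proj y), (hM (mem_range_self _)).trans (hN.trans N.le_succ),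
        hc_mem y hy⟩
  · have hx_acc : f x ∈ accumulate C N := hf (subset_closure (mem_iUnion_of_mem (N + 1) hx))
    rw [hfx] at hx_acc
    exact disjoint_left.mp (disjoint_accumulate hdisj N.lt_succ_self) hx_acc hx

lemma id_mem_closure_iUnion_levelMaps [T2Space X] [TotallyDisconnectedSpace X]
    (hne : ∀ n, (C n).Nonempty) (hdisj : Pairwise (Disjoint on C)) {φ : ℕ → ℕ}
    (hφ : StrictMono φ) : ContinuousMap.id X ∈ closure (⋃ n, levelMaps C (φ n)) := by
  refine mem_closure_iff_nhds.mpr fun t ht => ?_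
  obtain ⟨S, hS⟩ := exists_fiberPreservingMaps_subset_of_mem_nhds_id ht
  obtain ⟨M, hM⟩ := exists_fiberPreservingMaps_inter_levelMaps_nonempty C hne hdisj S
  obtain ⟨f, hfS, hf⟩ := hM (φ M) (hφ.id_le M)
  exact ⟨f, hS hfS, mem_iUnion_of_mem M hf⟩

end LevelMaps

/-- For an infinite compact Hausdorff zero-dimensional (totally disconnected) space `X`, there
are two disjoint subsets of `C_k(X, X)`, each a countable union of clopen sets, whose closures
both contain the identity map. In particular `C_k(X, X)` is not an F-space. -/
theorem continuousMaps_not_FSpace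
    (X : Type*) [TopologicalSpace X] [CompactSpace X] [T2Space X]
    [TotallyDisconnectedSpace X] [Infinite X] :
    (∃ U V : Set C(X, X), U ∩ V = ∅ ∧
      (∃ u : ℕ → Set C(X, X), (∀ n, IsClopen (u n)) ∧ U = ⋃ n, u n) ∧
      (∃ v : ℕ → Set C(X, X), (∀ n, IsClopen (v n)) ∧ V = ⋃ n, v n) ∧
      ContinuousMap.id X ∈ closure U ∧ ContinuousMap.id X ∈ closure V) ∧
    ¬IsFSpace C(X, X) := by
  obtain ⟨C, hC, hne, hdisj⟩ := exists_pairwise_disjoint_isClopen_nonempty X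
  have hUV : (⋃ n, levelMaps C (2 * n + 1)) ∩ ⋃ n, levelMaps C (2 * n) = ∅ :=
    disjoint_iff_inter_eq_empty.mp <| disjoint_iUnion_left.mpr fun m =>
      disjoint_iUnion_right.mpr fun n => pairwise_disjoint_levelMaps C (by omega)
  have hU := id_mem_closure_iUnion_levelMaps C hne hdisj (φ := (2 * · + 1))
    fun _ _ h => by dsimp only; omega
  have hV := id_mem_closure_iUnion_levelMaps C hne hdisj (φ := (2 * ·))
    fun _ _ h => by dsimp only; omega
  have hcoz := fun φ : ℕ → ℕ => isCozero_iUnion_of_isClopen fun n => isClopen_levelMaps C hC (φ n)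
  exact ⟨⟨_, _, hUV, ⟨_, fun n => isClopen_levelMaps C hC _, rfl⟩,
    ⟨_, fun n => isClopen_levelMaps C hC _, rfl⟩, hU, hV⟩,
    not_isFSpace_of_mem_closure_inter (hcoz _) (hcoz _) hUV hU hV⟩
end

section
/- Let X be a compact Hausdorff space and p ∈ X. If p is a P-point of X, then the constant map f_p ∈ C(X,X) with value p is a P-point of C_k(X,X); and if p is a weak P-point of X, then f_p is a weak P-point of C_k(X,X). -/
open Set Filter Topology

/-- A point `p` is a P-point if every countable intersection of open sets containing `p`
is a neighbourhood of `p`. -/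
def IsPPoint {Y : Type*} [TopologicalSpace Y] (p : Y) : Prop :=
  ∀ U : ℕ → Set Y, (∀ n, IsOpen (U n) ∧ p ∈ U n) → (⋂ n, U n) ∈ nhds p

/-- A point `p` is a weak P-point if it is not in the closure of any countable set avoiding
`p`. -/
def IsWeakPPoint {Y : Type*} [TopologicalSpace Y] (p : Y) : Prop :=
  ∀ S : Set Y, S.Countable → p ∉ S → p ∉ closure S

/-! For compact `X`, a constant map `X → Y` has a neighbourhood basis in `C_k(X, Y)` indexed by
the neighbourhoods `V` of its value: the maps with range in `V`. Both properties of `p` therefore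
transfer to `const X p`; for a weak P-point, a countable `S ∌ const X p` is pushed down to the
countable set of values `f (x f)`, `f ∈ S`, where `x f` is a point at which `f` differs from `p`. -/

namespace ContinuousMap

variable {X Y : Type*} [TopologicalSpace X] [TopologicalSpace Y]

theorem hasBasis_nhds_const [CompactSpace X] (c : Y) :
    (𝓝 (const X c)).HasBasis (· ∈ 𝓝 c) fun V ↦ {f : C(X, Y) | range f ⊆ V} := by
  refine (𝓝 c).basis_sets.nhds_continuousMapConst.to_hasBasis ?_ ?_
  · rintro ⟨K, V⟩ ⟨-, hV⟩
    exact ⟨V, hV, fun f hf ↦ (mapsTo_univ_iff_range_subset.mpr hf).mono_left (subset_univ K)⟩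
  · exact fun V hV ↦
      ⟨(univ, V), ⟨isCompact_univ, hV⟩, fun f hf ↦ mapsTo_univ_iff_range_subset.mp hf⟩

end ContinuousMap

section

variable {X Y : Type*} [TopologicalSpace X] [TopologicalSpace Y]

theorem IsPPoint.iInter_mem_nhds {p : Y} (hp : IsPPoint p) {U : ℕ → Set Y}
    (hU : ∀ n, U n ∈ 𝓝 p) : (⋂ n, U n) ∈ 𝓝 p :=
  mem_of_superset (hp (fun n ↦ interior (U n)) fun n ↦
      ⟨isOpen_interior, mem_interior_iff_mem_nhds.mpr (hU n)⟩)
    (iInter_mono fun _ ↦ interior_subset)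

theorem IsPPoint.const [CompactSpace X] {p : Y} (hp : IsPPoint p) :
    IsPPoint (ContinuousMap.const X p) := by
  intro U hU
  have hbasis := ContinuousMap.hasBasis_nhds_const (X := X) p
  choose V hV hVU using fun n ↦ hbasis.mem_iff.mp ((hU n).1.mem_nhds (hU n).2)
  refine mem_of_superset (hbasis.mem_of_mem (hp.iInter_mem_nhds hV)) fun f hf ↦ ?_
  exact mem_iInter.mpr fun n ↦ hVU n (hf.trans (iInter_subset V n))

theorem IsWeakPPoint.const [CompactSpace X] {p : Y} (hp : IsWeakPPoint p) :
    IsWeakPPoint (ContinuousMap.const X p) := by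
  intro S hS hpS
  have hne : ∀ f : S, ∃ x, f.1 x ≠ p := fun f ↦
    DFunLike.ne_iff.mp (ne_of_mem_of_not_mem f.2 hpS)
  choose x hx using hne
  have := hS.to_subtype
  have hpT : p ∉ range fun f : S ↦ f.1 (x f) := by
    rintro ⟨f, hf⟩
    exact hx f hf
  have hcompl : (range fun f : S ↦ f.1 (x f))ᶜ ∈ 𝓝 p := by
    rw [← mem_interior_iff_mem_nhds, interior_compl]
    exact hp _ (countable_range _) hpT
  rw [mem_closure_iff_nhds]
  intro hclosure
  obtain ⟨f, hf, hfS⟩ := hclosure _ ((ContinuousMap.hasBasis_nhds_const p).mem_of_mem hcompl)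
  exact hf (mem_range_self (x ⟨f, hfS⟩)) ⟨⟨f, hfS⟩, rfl⟩

end

theorem const_isPPoint_and_weakPPoint_general
    (X : Type*) [TopologicalSpace X] [CompactSpace X] (p : X) :
    (IsPPoint p → IsPPoint (ContinuousMap.const X p)) ∧
    (IsWeakPPoint p → IsWeakPPoint (ContinuousMap.const X p)) :=
  ⟨IsPPoint.const, IsWeakPPoint.const⟩

/-- For a compact Hausdorff space `X` and `p ∈ X`: if `p` is a (weak) P-point of `X`, then the
constant map with value `p` is a (weak) P-point of `C_k(X, X)`. -/
theorem const_isPPoint_and_weakPPoint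
    (X : Type*) [TopologicalSpace X] [CompactSpace X] [T2Space X] (p : X) :
    (IsPPoint p → IsPPoint (ContinuousMap.const X p)) ∧
    (IsWeakPPoint p → IsWeakPPoint (ContinuousMap.const X p)) :=
  const_isPPoint_and_weakPPoint_general X p
end

section
/- Let X be a locally compact Hausdorff totally disconnected (equivalently, zero-dimensional) space and x ∈ X. Then the evaluation map ev_x : C_k(X,X) → X given by ev_x(f) = f x is continuous and is an open map. -/
/-!
Replacing `f` on a small clopen neighbourhood `A` of `x` by the constant `y` gives a continuous
map depending continuously on `y`, sending `y` to itself under evaluation at `x`; as `A` shrinks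
to `x`, the patched map at `y = f x` converges to `f` in the compact-open topology. So through
every neighbourhood of `f` passes a continuous section of `ev_x`, which makes `ev_x` open.
-/

open Set Filter Topology TopologicalSpace

theorem IsOpenMap.of_sections_mem_nhds {α β : Type*} [TopologicalSpace α] [TopologicalSpace β]
    {f : α → β}
    (h : ∀ a, ∀ U ∈ 𝓝 a, ∃ g : β → α,
      ContinuousAt g (f a) ∧ Function.RightInverse g f ∧ U ∈ 𝓝 (g (f a))) :
    IsOpenMap f :=
  of_nhds_le fun a V hV => by
    obtain ⟨g, hg, hgf, hUg⟩ := h a _ hV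
    exact mem_of_superset (hg hUg) fun b hb => hgf b ▸ hb

namespace ContinuousMap

variable {X Y : Type*} [TopologicalSpace X] [TopologicalSpace Y]

open Classical in
noncomputable def setConstOn (f : C(X, Y)) (A : Clopens X) (y : Y) : C(X, Y) where
  toFun z := if z ∈ A then y else f z
  continuous_toFun := continuous_if (by simp [A.isClopen.frontier_eq]) continuousOn_const
    f.continuous.continuousOn

theorem setConstOn_apply_of_mem (f : C(X, Y)) {A : Clopens X} {z : X} (hz : z ∈ A) (y : Y) :
    f.setConstOn A y z = y :=
  if_pos hz

theorem setConstOn_apply_of_notMem (f : C(X, Y)) {A : Clopens X} {z : X} (hz : z ∉ A) (y : Y) :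
    f.setConstOn A y z = f z :=
  if_neg hz

open Classical in
theorem continuous_setConstOn (f : C(X, Y)) (A : Clopens X) : Continuous (f.setConstOn A) := by
  have hA : frontier (Prod.snd ⁻¹' (A : Set X) : Set (Y × X)) = ∅ :=
    (A.isClopen.preimage continuous_snd).frontier_eq
  exact continuous_of_continuous_uncurry _ <|
    continuous_if (fun p hp => absurd hp (hA ▸ notMem_empty p)) continuous_fst.continuousOn
      (f.continuous.comp continuous_snd).continuousOn

theorem tendsto_setConstOn [T2Space X] (f : C(X, Y)) (x : X) :
    Tendsto (fun A : Clopens X => f.setConstOn A (f x)) ((𝓝 x).smallSets.comap (↑))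
      (𝓝 f) := by
  rw [tendsto_nhds_compactOpen]
  rintro K hK U - hfKU
  simp only [eventually_comap, eventually_smallSets]
  by_cases hxU : f x ∈ U
  · refine ⟨univ, univ_mem, ?_⟩
    rintro - - A - z hz
    by_cases hzA : z ∈ A
    · exact (setConstOn_apply_of_mem f hzA _).symm ▸ hxU
    · exact (setConstOn_apply_of_notMem f hzA _).symm ▸ hfKU hz
  · refine ⟨Kᶜ, hK.isClosed.compl_mem_nhds fun hxK => hxU (hfKU hxK), ?_⟩
    rintro _ hAK A rfl z hz
    exact (setConstOn_apply_of_notMem f (fun hzA => hAK hzA hz) _).symm ▸ hfKU hz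

end ContinuousMap

/-- For a locally compact Hausdorff zero-dimensional (totally disconnected) space `X` and
`x ∈ X`, the evaluation map `f ↦ f x` on `C_k(X, X)` is continuous and open. -/
theorem eval_continuous_and_openMap
    (X : Type*) [TopologicalSpace X] [LocallyCompactSpace X] [T2Space X]
    [TotallyDisconnectedSpace X] (x : X) :
    Continuous (fun f : C(X, X) => f x) ∧ IsOpenMap (fun f : C(X, X) => f x) := by
  refine ⟨continuous_eval_const x, IsOpenMap.of_sections_mem_nhds fun f N hN => ?_⟩
  obtain ⟨W, hW, hWN⟩ := eventually_smallSets.1 <| eventually_comap.1 <|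
    (f.tendsto_setConstOn x).eventually (eventually_eventually_nhds.2 hN)
  obtain ⟨A, hA, hxA, hAW⟩ := loc_compact_Haus_tot_disc_of_zero_dim.mem_nhds_iff.1 hW
  exact ⟨f.setConstOn ⟨A, hA⟩, (f.continuous_setConstOn _).continuousAt,
    fun y => f.setConstOn_apply_of_mem hxA y, hWN A hAW ⟨A, hA⟩ rfl⟩
end

section
/- Let X be an infinite compact Hausdorff totally disconnected (equivalently, zero-dimensional) space and let h : X ≃ₜ X be a homeomorphism of X onto itself. Then h, regarded as an element of C(X,X), is not a P-point of C_k(X,X). -/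
/-! Let `p` be an accumulation point of a countable set `S ⊆ X`. If an injective `f` were a
P-point, the countably many open conditions `g p ≠ f s` (`s ∈ S \ {p}`) would hold on a whole
neighbourhood of `f`. But since `X` has a basis of clopen sets, every neighbourhood of `f` contains
a map that agrees with `f` off a small clopen neighbourhood `D` of `p` and is constant `f q` on
`D`, for any `q ∈ D`; taking `q ∈ S \ {p}` gives a contradiction. -/

open Set Filter Topology Function

theorem IsPPoint.countableInterFilter {Y : Type*} [TopologicalSpace Y] {p : Y}
    (hp : IsPPoint p) : CountableInterFilter (𝓝 p) where
  countable_sInter_mem S hS hmem := by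
    rcases S.eq_empty_or_nonempty with rfl | hne
    · simp
    obtain ⟨U, rfl⟩ := hS.exists_eq_range hne
    have hint : ⋂ n, interior (U n) ∈ 𝓝 p :=
      hp _ fun n ↦ ⟨isOpen_interior, mem_interior_iff_mem_nhds.2 (hmem _ ⟨n, rfl⟩)⟩
    rw [sInter_range]
    exact mem_of_superset hint (iInter_mono fun n ↦ interior_subset)

theorem IsPPoint.preimage_compl_mem_nhds {Y Z : Type*} [TopologicalSpace Y] [TopologicalSpace Z]
    [T1Space Z] {p : Y} (hp : IsPPoint p) {φ : Y → Z} (hφ : ContinuousAt φ p) {S : Set Z}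
    (hS : S.Countable) (hpS : φ p ∉ S) : φ ⁻¹' Sᶜ ∈ 𝓝 p := by
  have := hp.countableInterFilter
  have hSc : φ ⁻¹' Sᶜ = ⋂ s ∈ S, φ ⁻¹' {s}ᶜ := by ext; aesop
  rw [hSc, countable_bInter_mem hS]
  exact fun s hs ↦ hφ (isOpen_compl_singleton.mem_nhds fun hps ↦ hpS (hps ▸ hs))

theorem ContinuousMap.eventually_exists_apply_eq_of_mem_nhds {X Y : Type*} [TopologicalSpace X]
    [CompactSpace X] [T2Space X] [TotallyDisconnectedSpace X] [UniformSpace Y]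
    {f : C(X, Y)} {N : Set C(X, Y)} (hN : N ∈ 𝓝 f) (p : X) :
    ∀ᶠ q in 𝓝 p, ∃ g ∈ N, g p = f q := by
  classical
  obtain ⟨V, hV, hVN⟩ :=
    (nhds_basis_uniformity' hasBasis_compactConvergenceUniformity_of_compact).mem_iff.1 hN
  have hfV : (fun xy : X × X ↦ (f xy.1, f xy.2)) ⁻¹' V ∈ 𝓝 p ×ˢ 𝓝 p := by
    rw [← nhds_prod_eq]
    exact (f.continuous.prodMap f.continuous).tendsto (p, p) (nhds_le_uniformity (f p) hV)
  obtain ⟨D, ⟨hpD, hD⟩, hDV⟩ := (nhds_basis_clopen p).prod_self.mem_iff.1 hfV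
  filter_upwards [hD.isOpen.mem_nhds hpD] with q hq
  have hcont : Continuous (D.piecewise (fun _ ↦ f q) f) :=
    continuous_const.piecewise (by simp [hD.frontier_eq]) f.continuous
  refine ⟨⟨_, hcont⟩, hVN fun x ↦ ?_, by simp [hpD]⟩
  by_cases hx : x ∈ D
  · simpa [hx] using hDV (mk_mem_prod hx hq)
  · simpa [hx] using refl_mem_uniformity hV

theorem ContinuousMap.not_isPPoint_of_injective {X Y : Type*} [TopologicalSpace X]
    [CompactSpace X] [T2Space X] [TotallyDisconnectedSpace X] [Infinite X] [UniformSpace Y]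
    [T1Space Y] {f : C(X, Y)} (hf : Injective f) : ¬IsPPoint f := by
  intro hP
  obtain ⟨p, hp⟩ :=
    (infinite_range_of_injective (Infinite.natEmbedding X).injective).exists_accPt_principal
  set S := range (Infinite.natEmbedding X) \ {p}
  have hN : (fun g : C(X, Y) ↦ g p) ⁻¹' (f '' S)ᶜ ∈ 𝓝 f :=
    hP.preimage_compl_mem_nhds (continuous_eval_const p).continuousAt
      (((countable_range _).mono sdiff_subset).image f) fun hpS ↦ (hf.mem_set_image.1 hpS).2 rfl
  obtain ⟨q, ⟨g, hgN, hgq⟩, hqp, hqS⟩ :=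
    ((eventually_exists_apply_eq_of_mem_nhds hN p).and_frequently
      (accPt_iff_frequently.1 hp)).exists
  exact hgN ⟨q, ⟨hqS, hqp⟩, hgq.symm⟩

/-- For an infinite compact Hausdorff zero-dimensional (totally disconnected) space `X`, no
self-homeomorphism of `X` is a P-point of `C_k(X, X)`. -/
theorem homeomorph_not_pPoint
    (X : Type*) [TopologicalSpace X] [CompactSpace X] [T2Space X]
    [TotallyDisconnectedSpace X] [Infinite X] (h : X ≃ₜ X) :
    ¬IsPPoint ((h : C(X, X)) : C(X, X)) := by
  let : UniformSpace X := uniformSpaceOfCompactR1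
  exact ContinuousMap.not_isPPoint_of_injective h.injective
end

section
/- The space C_k(ω*,ω*) contains a P-point if and only if ω* contains a P-point. -/
open Set Filter Topology TopologicalSpace

theorem isPPoint_iff_countableInterFilter {Y : Type*} [TopologicalSpace Y] (p : Y) :
    IsPPoint p ↔ CountableInterFilter (𝓝 p) := by
  refine ⟨fun hp ↦ ⟨fun S hS hSp ↦ ?_⟩, fun _ U hU ↦
    countable_iInter_mem.2 fun n ↦ (hU n).1.mem_nhds (hU n).2⟩
  rcases S.eq_empty_or_nonempty with rfl | hne
  · simp
  obtain ⟨u, rfl⟩ := hS.exists_eq_range hne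
  rw [sInter_range]
  refine mem_of_superset (hp (fun n ↦ interior (u n)) fun n ↦ ⟨isOpen_interior, ?_⟩)
    (iInter_mono fun n ↦ interior_subset)
  exact mem_interior_iff_mem_nhds.2 (hSp _ (mem_range_self n))

namespace ContinuousMap

variable {X Y : Type*} [TopologicalSpace X] [TopologicalSpace Y]

theorem map_eval_nhds [T2Space X] (hX : IsTopologicalBasis {s : Set X | IsClopen s})
    (f : C(X, Y)) (x : X) : map (fun g : C(X, Y) ↦ g x) (𝓝 f) = 𝓝 (f x) := by
  classical
  refine le_antisymm (continuous_eval_const x).continuousAt (le_map fun s hs ↦ ?_)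
  obtain ⟨S, hSfin, hS, hSs⟩ := ContinuousMap.mem_nhds_iff.1 hs
  have hnear : ∀ᶠ y in 𝓝 (f x), ∀ KU ∈ S, x ∈ KU.1 → y ∈ KU.2 :=
    (hSfin.eventually_all).2 fun KU hKU ↦ by
      by_cases hxK : x ∈ KU.1
      · have ⟨_, hU, hfKU⟩ := hS KU.1 KU.2 hKU
        filter_upwards [hU.mem_nhds (hfKU hxK)] with y hy using fun _ ↦ hy
      · exact Eventually.of_forall fun _ h ↦ absurd h hxK
  have hfar : ∀ᶠ z in 𝓝 x, ∀ KU ∈ S, x ∉ KU.1 → z ∉ KU.1 :=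
    (hSfin.eventually_all).2 fun KU hKU ↦ by
      by_cases hxK : x ∈ KU.1
      · exact Eventually.of_forall fun _ h ↦ absurd hxK h
      · filter_upwards [(hS KU.1 KU.2 hKU).1.isClosed.isOpen_compl.mem_nhds hxK]
          with z hz using fun _ ↦ hz
  obtain ⟨C, hC, hxC, hCfar⟩ := hX.mem_nhds_iff.1 hfar
  filter_upwards [hnear] with y hy
  let g : C(X, Y) := ⟨C.piecewise (fun _ ↦ y) f,
    continuous_const.piecewise (by simp [hC.frontier_eq]) f.continuous⟩
  refine ⟨g, hSs fun K U hKU z hz ↦ ?_, by simp [g, hxC]⟩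
  by_cases hzC : z ∈ C
  · have hxK : x ∈ K := by_contra fun hxK ↦ hCfar hzC (K, U) hKU hxK hz
    simpa [g, hzC] using hy (K, U) hKU hxK
  · simpa [g, hzC] using (hS K U hKU).2.2 hz

theorem countableInterFilter_nhds_const [CompactSpace X] (p : Y) [CountableInterFilter (𝓝 p)] :
    CountableInterFilter (𝓝 (const X p)) := by
  refine ⟨fun S hS hSp ↦ ?_⟩
  have hbasis := (𝓝 p).basis_sets.nhds_continuousMapConst (X := X)
  choose! Ki hKi hKis using fun s hs ↦ hbasis.mem_iff.1 (hSp s hs)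
  have hW : ⋂ s ∈ S, (Ki s).2 ∈ 𝓝 p := (countable_bInter_mem hS).2 fun s hs ↦ (hKi s hs).2
  filter_upwards [hbasis.mem_of_mem (i := (univ, _)) ⟨isCompact_univ, hW⟩] with g hg s hs
  exact hKis s hs fun z _ ↦ mem_iInter₂.1 (hg (mem_univ z)) s hs

theorem exists_isPPoint_iff [Nonempty X] [CompactSpace X] [T2Space X]
    [TotallyDisconnectedSpace X] : (∃ f : C(X, Y), IsPPoint f) ↔ ∃ p : Y, IsPPoint p := by
  simp only [isPPoint_iff_countableInterFilter]
  constructor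
  · rintro ⟨f, hf⟩
    obtain ⟨x⟩ := ‹Nonempty X›
    exact ⟨f x, map_eval_nhds isTopologicalBasis_isClopen f x ▸ inferInstance⟩
  · rintro ⟨p, hp⟩
    exact ⟨const X p, countableInterFilter_nhds_const p⟩

end ContinuousMap

section StoneCech

variable {α : Type*} [TopologicalSpace α] [DiscreteTopology α]

instance : ExtremallyDisconnected (StoneCech α) :=
  CompactT2.Projective.extremallyDisconnected StoneCech.projective

theorem isOpen_singleton_stoneCechUnit (a : α) : IsOpen {stoneCechUnit a} := by
  obtain ⟨V, hV, hVa⟩ := isInducing_stoneCechUnit.isOpen_iff.1 (isOpen_discrete {a})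
  have haV : stoneCechUnit a ∈ V := by rw [← mem_preimage, hVa]; rfl
  have hVrange : V ∩ range stoneCechUnit = {stoneCechUnit a} := by
    refine Subset.antisymm ?_ (singleton_subset_iff.2 ⟨haV, mem_range_self a⟩)
    rintro _ ⟨hbV, b, rfl⟩
    rw [← mem_preimage, hVa, mem_singleton_iff] at hbV
    rw [hbV]
    rfl
  have hVsub := denseRange_stoneCechUnit.open_subset_closure_inter hV
  rw [hVrange, closure_singleton] at hVsub
  rwa [(singleton_subset_iff.2 haV).antisymm hVsub]

theorem isOpen_range_stoneCechUnit : IsOpen (range (stoneCechUnit : α → StoneCech α)) := by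
  rw [← iUnion_singleton_eq_range]
  exact isOpen_iUnion isOpen_singleton_stoneCechUnit

theorem nonempty_compl_range_stoneCechUnit [Infinite α] :
    (range (stoneCechUnit : α → StoneCech α))ᶜ.Nonempty := by
  by_contra h
  have hrange : range (stoneCechUnit : α → StoneCech α) = univ := by
    simpa [not_nonempty_iff_eq_empty] using h
  have : DiscreteTopology (StoneCech α) := discreteTopology_iff_isOpen_singleton.2 fun z ↦ by
    obtain ⟨a, rfl⟩ := hrange.symm ▸ mem_univ z
    exact isOpen_singleton_stoneCechUnit a
  have : Finite (StoneCech α) := finite_of_compact_of_discrete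
  have : Finite α := Finite.of_injective _ injective_stoneCechUnit_of_t35Space
  exact not_finite α

end StoneCech

instance : Nonempty OmegaStar := nonempty_subtype.2 nonempty_compl_range_stoneCechUnit

instance : CompactSpace OmegaStar :=
  isCompact_iff_compactSpace.1 isOpen_range_stoneCechUnit.isClosed_compl.isCompact

/-- `C_k(ω*, ω*)` contains a P-point iff `ω*` contains a P-point. -/
theorem exists_pPoint_continuousMaps_iff :
    (∃ f : C(OmegaStar, OmegaStar), IsPPoint f) ↔ ∃ p : OmegaStar, IsPPoint p :=
  ContinuousMap.exists_isPPoint_iff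
end

section
/- Let X be a compact Hausdorff F-space. If A and B are countable subsets of X such that (closure A) ∩ B = ∅ and A ∩ (closure B) = ∅, then (closure A) ∩ (closure B) = ∅. Moreover, if X is in addition totally disconnected (equivalently, zero-dimensional), then there is a clopen set C ⊆ X with A ⊆ C and C ∩ B = ∅. -/
open Set

lemma exists_continuous_nonneg_pos_iff_exists_pos {X : Type*} [TopologicalSpace X]
    {g : ℕ → X → ℝ} (hc : ∀ n, Continuous (g n)) (h0 : ∀ n x, 0 ≤ g n x) (h1 : ∀ n x, g n x ≤ 1) :
    ∃ f : X → ℝ, Continuous f ∧ (∀ x, 0 ≤ f x) ∧ ∀ x, 0 < f x ↔ ∃ n, 0 < g n x := by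
  have hterm_nonneg : ∀ n x, 0 ≤ (1 / 2 : ℝ) ^ n * g n x := fun n x => by
    have := h0 n x; positivity
  have hterm_le : ∀ n x, (1 / 2 : ℝ) ^ n * g n x ≤ (1 / 2) ^ n := fun n x =>
    mul_le_of_le_one_right (by positivity) (h1 n x)
  have hsummable : ∀ x, Summable fun n => (1 / 2 : ℝ) ^ n * g n x := fun x =>
    summable_geometric_two.of_nonneg_of_le (hterm_nonneg · x) (hterm_le · x)
  refine ⟨fun x => ∑' n, (1 / 2 : ℝ) ^ n * g n x, ?_, fun x => tsum_nonneg (hterm_nonneg · x),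
    fun x => ⟨fun hpos => ?_, fun ⟨n, hn⟩ => ?_⟩⟩
  · refine continuous_tsum (fun n => continuous_const.mul (hc n)) summable_geometric_two
      fun n x => ?_
    rw [Real.norm_of_nonneg (hterm_nonneg n x)]
    exact hterm_le n x
  · by_contra! hzero
    have : ∀ n, (1 / 2 : ℝ) ^ n * g n x = 0 := fun n => by
      rw [le_antisymm (hzero n) (h0 n x), mul_zero]
    simp only [this, tsum_zero, lt_irrefl] at hpos
  · exact (hsummable x).tsum_pos (hterm_nonneg · x) n (by positivity)

lemma exists_continuous_pos_on_countable_zero_on_closed {X : Type*} [TopologicalSpace X]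
    [CompletelyRegularSpace X] {A K : Set X} (hA : A.Countable) (hK : IsClosed K)
    (hAK : Disjoint A K) :
    ∃ f : X → ℝ, Continuous f ∧ (∀ a ∈ A, 0 < f a) ∧ ∀ x ∈ K, f x = 0 := by
  rcases A.eq_empty_or_nonempty with rfl | hne
  · exact ⟨0, continuous_const, fun _ => False.elim, fun _ _ => rfl⟩
  obtain ⟨a, rfl⟩ := hA.exists_eq_range hne
  choose φ hφc hφa hφK using fun n =>
    CompletelyRegularSpace.completely_regular (a n) K hK
      (hAK.notMem_of_mem_left (mem_range_self n))
  obtain ⟨f, hfc, hf0, hfpos⟩ := exists_continuous_nonneg_pos_iff_exists_pos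
    (g := fun n x => 1 - (φ n x : ℝ)) (fun n => continuous_const.sub (hφc n).subtype_val)
    (fun n x => sub_nonneg.2 (φ n x).2.2) (fun n x => sub_le_self _ (φ n x).2.1)
  refine ⟨f, hfc, ?_, fun x hx => ?_⟩
  · rintro _ ⟨n, rfl⟩
    exact (hfpos _).2 ⟨n, by simp [hφa n]⟩
  · refine le_antisymm (not_lt.1 fun hpos => ?_) (hf0 x)
    obtain ⟨n, hn⟩ := (hfpos x).1 hpos
    simp [hφK n hx] at hn

lemma IsCozero.setOf_lt {Y : Type*} [TopologicalSpace Y] {f g : Y → ℝ} (hf : Continuous f)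
    (hg : Continuous g) : IsCozero {y | f y < g y} :=
  ⟨fun y => max (g y - f y) 0, (hg.sub hf).max continuous_const, by ext y; simp⟩

lemma CompletelySeparated.disjoint_closure {Y : Type*} [TopologicalSpace Y] {A B : Set Y}
    (h : CompletelySeparated A B) : Disjoint (closure A) (closure B) := by
  obtain ⟨h, hc, hA, hB⟩ := h
  have hA' : closure A ⊆ h ⁻¹' {0} := closure_minimal hA (isClosed_singleton.preimage hc)
  have hB' : closure B ⊆ h ⁻¹' {1} := closure_minimal hB (isClosed_singleton.preimage hc)
  exact ((disjoint_singleton.2 zero_ne_one).preimage h).mono hA' hB'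

lemma IsFSpace.disjoint_closure {Y : Type*} [TopologicalSpace Y] (hY : IsFSpace Y)
    {U V : Set Y} (hU : IsCozero U) (hV : IsCozero V) (hUV : Disjoint U V) :
    Disjoint (closure U) (closure V) :=
  (hY U V hU hV (disjoint_iff_inter_eq_empty.1 hUV)).disjoint_closure

/-- In a compact Hausdorff F-space, countable sets `A`, `B` with `closure A ∩ B = ∅` and
`A ∩ closure B = ∅` have disjoint closures; moreover, if the space is totally disconnected,
some clopen set contains `A` and misses `B`. -/
theorem fspace_countable_separation
    (X : Type*) [TopologicalSpace X] [CompactSpace X] [T2Space X] (hX : IsFSpace X)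
    (A B : Set X) (hA : A.Countable) (hB : B.Countable)
    (h1 : closure A ∩ B = ∅) (h2 : A ∩ closure B = ∅) :
    closure A ∩ closure B = ∅ ∧
    (TotallyDisconnectedSpace X → ∃ C : Set X, IsClopen C ∧ A ⊆ C ∧ C ∩ B = ∅) := by
  obtain ⟨f, hfc, hfA, hfB⟩ := exists_continuous_pos_on_countable_zero_on_closed hA
    isClosed_closure (disjoint_iff_inter_eq_empty.2 h2)
  obtain ⟨g, hgc, hgB, hgA⟩ := exists_continuous_pos_on_countable_zero_on_closed hB
    isClosed_closure (disjoint_iff_inter_eq_empty.2 h1).symm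
  have hAU : A ⊆ {x | g x < f x} := fun a ha => by
    simpa [hgA a (subset_closure ha)] using hfA a ha
  have hBV : B ⊆ {x | f x < g x} := fun b hb => by
    simpa [hfB b (subset_closure hb)] using hgB b hb
  have hdisj : Disjoint (closure A) (closure B) :=
    (hX.disjoint_closure (.setOf_lt hgc hfc) (.setOf_lt hfc hgc)
      (disjoint_left.2 fun x (hx : g x < f x) => hx.not_gt)).mono
      (closure_mono hAU) (closure_mono hBV)
  refine ⟨disjoint_iff_inter_eq_empty.1 hdisj, fun _ => ?_⟩
  obtain ⟨C, hC, hAC, hCB⟩ := exists_clopen_of_closed_subset_open isClosed_closure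
    isClosed_closure.isOpen_compl hdisj.subset_compl_right
  refine ⟨C, hC, subset_closure.trans hAC, disjoint_iff_inter_eq_empty.1 ?_⟩
  exact disjoint_compl_left.mono hCB subset_closure
end

section
/- Let X be a compact Hausdorff space, suppose the sequence (f_n) converges to f in C_k(X,X), and let p_n ∈ X for n ∈ ℕ. Set P = {p_n | n ∈ ℕ}, A = f '' P and B = {f_n p_n | n ∈ ℕ}. Then: (1) closure A = f '' (closure P); (2) every accumulation point of A belongs to the closure of B; (3) every accumulation point of B belongs to the closure of A. -/
/-!
On a compact Hausdorff space convergence in `C_k(X, X)` is uniform convergence for the unique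
compatible uniformity, so `f pₙ` and `fₙ pₙ` are eventually `W`-close for every entourage `W`.
In a T1 space an accumulation point of the range of a sequence is a cluster point of the
sequence, and cluster points pass between eventually close sequences; this gives (2) and (3).
Part (1) holds because `f` is a closed map.
-/

open Filter Set Topology Uniformity

section

variable {X ι : Type*} [TopologicalSpace X] {x : X} {u : ι → X}

theorem MapClusterPt.mem_closure_range {l : Filter ι} (h : MapClusterPt x l u) :
    x ∈ closure (range u) :=
  mem_closure_iff_clusterPt.2 <| ClusterPt.mono h <| tendsto_principal.2 <|
    .of_forall mem_range_self

theorem mapClusterPt_cofinite_of_mem_closure_range_diff [T1Space X]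
    (h : x ∈ closure (range u \ {x})) : MapClusterPt x cofinite u := by
  have hacc : AccPt x (𝓟 (range u)) :=
    accPt_principal_iff_clusterPt.2 (mem_closure_iff_clusterPt.1 h)
  refine mapClusterPt_iff_frequently.2 fun s hs => frequently_cofinite_iff_infinite.2 ?_
  refine (Infinite.of_accPt (hacc.nhds_inter hs)).mono ?_ |>.of_image u
  rintro _ ⟨hs, n, rfl⟩
  exact mem_image_of_mem u hs

end

theorem MapClusterPt.of_tendsto_uniformity {X ι : Type*} [UniformSpace X] {x : X}
    {l : Filter ι} {u v : ι → X} (hu : MapClusterPt x l u)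
    (huv : Tendsto (fun i => (u i, v i)) l (𝓤 X)) : MapClusterPt x l v := by
  refine mapClusterPt_iff_frequently.2 fun s hs => ?_
  obtain ⟨V, hV, hVs⟩ := UniformSpace.mem_nhds_iff.1 hs
  obtain ⟨W, hW, hWV⟩ := comp_mem_uniformity_sets hV
  refine ((hu.frequently (UniformSpace.ball_mem_nhds x hW)).and_eventually (huv hW)).mono ?_
  rintro i ⟨hxu, huv⟩
  exact hVs (hWV ⟨u i, hxu, huv⟩)

theorem TendstoUniformly.tendsto_uniformity_comp {X Y ι : Type*} [UniformSpace Y]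
    {l : Filter ι} {F : ι → X → Y} {f : X → Y} (h : TendstoUniformly F f l) (p : ι → X) :
    Tendsto (fun i => (f (p i), F i (p i))) l (𝓤 Y) :=
  fun _ hW => (h _ hW).mono fun _ hi => hi _

/-- Let `X` be compact Hausdorff, let `fₙ → f` in `C_k(X, X)` and let `pₙ ∈ X`. With
`P = {pₙ}`, `A = f '' P`, `B = {fₙ pₙ}`: (1) `closure A = f '' closure P`; (2) every
accumulation point of `A` lies in `closure B`; (3) every accumulation point of `B` lies in
`closure A`. -/
theorem closure_image_and_accumulation_points
    (X : Type*) [TopologicalSpace X] [CompactSpace X] [T2Space X]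
    (F : ℕ → C(X, X)) (f : C(X, X))
    (hconv : Filter.Tendsto F Filter.atTop (nhds f)) (p : ℕ → X) :
    closure ((f : X → X) '' Set.range p) = (f : X → X) '' closure (Set.range p) ∧
    (∀ x : X, x ∈ closure (((f : X → X) '' Set.range p) \ {x}) →
      x ∈ closure (Set.range (fun n => F n (p n)))) ∧
    (∀ x : X, x ∈ closure ((Set.range (fun n => F n (p n))) \ {x}) →
      x ∈ closure ((f : X → X) '' Set.range p)) := by
  let _ : UniformSpace X := uniformSpaceOfCompactR1
  have hclose : Tendsto (fun n => (f (p n), F n (p n))) cofinite (𝓤 X) := by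
    rw [Nat.cofinite_eq_atTop]
    exact (ContinuousMap.tendsto_iff_tendstoUniformly.1 hconv).tendsto_uniformity_comp p
  have hA : (f : X → X) '' range p = range (fun n => f (p n)) := (range_comp f p).symm
  refine ⟨f.continuous.isClosedMap.closure_image_eq_of_continuous f.continuous _, ?_, ?_⟩
  · intro x hx
    rw [hA] at hx
    exact ((mapClusterPt_cofinite_of_mem_closure_range_diff hx).of_tendsto_uniformity
      hclose).mem_closure_range
  · intro x hx
    rw [hA]
    exact ((mapClusterPt_cofinite_of_mem_closure_range_diff hx).of_tendsto_uniformity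
      hclose.uniformity_symm).mem_closure_range
end

section
/- Let X be a compact Hausdorff F-space. Then C_k(X,X) contains no non-trivial convergent sequences: if a sequence (f_n) in C(X,X) converges to f in C_k(X,X), then f_n = f for all sufficiently large n. -/
open Filter Topology Set Uniformity

section Cozero

variable {X : Type*} [TopologicalSpace X]

theorem isCozero_iUnion {s : ℕ → Set X} (hs : ∀ k, IsCozero (s k)) : IsCozero (⋃ k, s k) := by
  choose g hg hgs using hs
  set t : ℕ → X → ℝ := fun k x => (1 / 2) ^ k * min |g k x| 1
  have ht_nonneg (k : ℕ) (x : X) : 0 ≤ t k x := by positivity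
  have ht_le (k : ℕ) (x : X) : ‖t k x‖ ≤ (1 / 2) ^ k := by
    rw [Real.norm_of_nonneg (ht_nonneg k x)]
    exact mul_le_of_le_one_right (by positivity) (min_le_right _ _)
  have ht_pos_iff (k : ℕ) (x : X) : 0 < t k x ↔ x ∈ s k := by
    simp [t, hgs k]
  have hsum : Summable fun k : ℕ => (1 / 2 : ℝ) ^ k := summable_geometric_two
  refine ⟨fun x => ∑' k, t k x, continuous_tsum (fun k => by fun_prop) hsum ht_le, ?_⟩
  ext x
  simp only [mem_iUnion, mem_ofPred_eq]
  constructor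
  · rintro ⟨k, hk⟩
    exact ((hsum.of_norm_bounded (ht_le · x)).tsum_pos (ht_nonneg · x) k
      ((ht_pos_iff k x).2 hk)).ne'
  · contrapose!
    intro hx
    have (k : ℕ) : t k x = 0 := by
      by_contra hk
      exact hx k ((ht_pos_iff k x).1 ((ht_nonneg k x).lt_of_ne' hk))
    simp [this]

theorem exists_isCozero_subset_of_mem_nhds [CompletelyRegularSpace X] {a : X} {s : Set X}
    (hs : s ∈ 𝓝 a) : ∃ U, IsCozero U ∧ a ∈ U ∧ U ⊆ s := by
  obtain ⟨f, hf, hfa, hf1⟩ := CompletelyRegularSpace.completely_regular_isOpen a (interior s)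
    isOpen_interior (mem_interior_iff_mem_nhds.2 hs)
  refine ⟨{x | (1 : ℝ) - f x ≠ 0}, ⟨_, by fun_prop, rfl⟩, by simp [hfa], fun x hx => ?_⟩
  by_contra hxs
  exact hx (by simp [hf1 fun h => hxs (interior_subset h)])

end Cozero

section Tychonoff

variable {X : Type*} [TopologicalSpace X] [T35Space X]

theorem exists_disjoint_isCozero_of_ne {a b p : X} (hab : a ≠ b) (hap : a ≠ p) (hbp : b ≠ p)
    {s : Set X} (hsa : s ∈ 𝓝 a) (hsb : s ∈ 𝓝 b) :
    ∃ U V, IsCozero U ∧ IsCozero V ∧ Disjoint U V ∧ a ∈ U ∧ b ∈ V ∧ U ∪ V ⊆ s ∧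
      (U ∪ V)ᶜ ∈ 𝓝 p := by
  obtain ⟨ta, hta, tb, htb, habt⟩ := Filter.disjoint_iff.1 (disjoint_nhds_nhds.2 hab)
  obtain ⟨ta', hta', tp, htp, hapt⟩ := Filter.disjoint_iff.1 (disjoint_nhds_nhds.2 hap)
  obtain ⟨tb', htb', tp', htp', hbpt⟩ := Filter.disjoint_iff.1 (disjoint_nhds_nhds.2 hbp)
  obtain ⟨U, hU, haU, hUs⟩ := exists_isCozero_subset_of_mem_nhds
    (inter_mem (inter_mem hsa hta) hta')
  obtain ⟨V, hV, hbV, hVs⟩ := exists_isCozero_subset_of_mem_nhds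
    (inter_mem (inter_mem hsb htb) htb')
  have hUa : U ⊆ ta ∩ ta' := hUs.trans fun x hx => ⟨hx.1.2, hx.2⟩
  have hVb : V ⊆ tb ∩ tb' := hVs.trans fun x hx => ⟨hx.1.2, hx.2⟩
  refine ⟨U, V, hU, hV, habt.mono (hUa.trans inter_subset_left) (hVb.trans inter_subset_left),
    haU, hbV, union_subset (hUs.trans fun x hx => hx.1.1) (hVs.trans fun x hx => hx.1.1),
    mem_of_superset (inter_mem htp htp') ?_⟩
  rw [subset_compl_iff_disjoint_left, disjoint_union_left]
  exact ⟨hapt.mono (hUa.trans inter_subset_right) inter_subset_left,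
    hbpt.mono (hVb.trans inter_subset_right) inter_subset_right⟩

theorem exists_disjoint_isCozero_frequently_mem {u w : ℕ → X} {p : X} (l : Filter ℕ) [l.NeBot]
    (hl : l ≤ atTop) (hu : Tendsto u l (𝓝 p)) (hw : Tendsto w l (𝓝 p))
    (hne : ∀ᶠ n in l, u n ≠ w n ∧ u n ≠ p ∧ w n ≠ p) :
    ∃ A B, IsCozero A ∧ IsCozero B ∧ Disjoint A B ∧ ∃ᶠ n in atTop, u n ∈ A ∧ w n ∈ B := by
  let Admissible : ℕ × Set X × Set X → Prop := fun c => IsCozero c.2.1 ∧ IsCozero c.2.2 ∧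
    Disjoint c.2.1 c.2.2 ∧ u c.1 ∈ c.2.1 ∧ w c.1 ∈ c.2.2 ∧ (c.2.1 ∪ c.2.2)ᶜ ∈ 𝓝 p
  let Before : ℕ × Set X × Set X → ℕ × Set X × Set X → Prop := fun c d =>
    c.1 < d.1 ∧ Disjoint (c.2.1 ∪ c.2.2) (d.2.1 ∪ d.2.2)
  obtain ⟨c, hc, hcc⟩ := exists_seq_of_forall_finset_exists Admissible Before fun S hS => by
    have hO : ⋂ d ∈ S, (d.2.1 ∪ d.2.2)ᶜ ∈ 𝓝 p :=
      (biInter_finset_mem S).2 fun d hd => (hS d hd).2.2.2.2.2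
    have hO' := interior_mem_nhds.2 hO
    obtain ⟨n, ⟨⟨hun, hwn⟩, hne, hpn⟩, hn⟩ := (((hu.eventually_mem hO').and
      (hw.eventually_mem hO')).and hne |>.and (hl (eventually_gt_atTop (S.sup Prod.fst)))).exists
    obtain ⟨U, V, hU, hV, hUV, huU, hwV, hUVO, hUVp⟩ := exists_disjoint_isCozero_of_ne hne
      hpn.1 hpn.2 (mem_interior_iff_mem_nhds.1 hun) (mem_interior_iff_mem_nhds.1 hwn)
    refine ⟨(n, U, V), ⟨hU, hV, hUV, huU, hwV, hUVp⟩, fun d hd => ⟨(S.le_sup hd).trans_lt hn, ?_⟩⟩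
    exact subset_compl_iff_disjoint_left.1 (hUVO.trans (biInter_subset_of_mem hd))
  refine ⟨⋃ k, (c k).2.1, ⋃ k, (c k).2.2, isCozero_iUnion fun k => (hc k).1,
    isCozero_iUnion fun k => (hc k).2.1, ?_, ?_⟩
  · refine disjoint_iUnion_left.2 fun j => disjoint_iUnion_right.2 fun k => ?_
    rcases lt_trichotomy j k with hjk | rfl | hkj
    · exact (hcc j k hjk).2.mono subset_union_left subset_union_right
    · exact (hc j).2.2.1
    · exact (hcc k j hkj).2.symm.mono subset_union_left subset_union_right
  · have hmono : StrictMono fun k => (c k).1 := fun j k hjk => (hcc j k hjk).1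
    exact hmono.tendsto_atTop.frequently (Frequently.of_forall fun k =>
      ⟨mem_iUnion_of_mem k (hc k).2.2.2.1, mem_iUnion_of_mem k (hc k).2.2.2.2.1⟩)

theorem IsFSpace.exists_continuous_not_tendsto_uniformity (hX : IsFSpace X) {u w : ℕ → X}
    {p : X} (l : Filter ℕ) [l.NeBot] (hl : l ≤ atTop) (hu : Tendsto u l (𝓝 p))
    (hw : Tendsto w l (𝓝 p)) (hne : ∀ᶠ n in l, u n ≠ w n ∧ u n ≠ p ∧ w n ≠ p) :
    ∃ h : X → ℝ, Continuous h ∧ ¬Tendsto (fun n => (h (u n), h (w n))) atTop (𝓤 ℝ) := by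
  obtain ⟨A, B, hA, hB, hAB, hfreq⟩ := exists_disjoint_isCozero_frequently_mem l hl hu hw hne
  obtain ⟨h, hh, hA0, hB1⟩ := hX A B hA hB hAB.inter_eq
  refine ⟨h, hh, fun hlim => ?_⟩
  obtain ⟨n, ⟨huA, hwB⟩, hn⟩ :=
    (hfreq.and_eventually (hlim (Metric.dist_mem_uniformity one_pos))).exists
  simp [hA0 _ huA, hB1 _ hwB] at hn

theorem IsFSpace.eventually_eq_of_tendsto (hX : IsFSpace X) {y : ℕ → X} {p : X}
    (hy : Tendsto y atTop (𝓝 p)) : ∀ᶠ n in atTop, y n = p := by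
  by_contra hfreq
  obtain ⟨φ, hφ, hφp⟩ := extraction_of_frequently_atTop (not_eventually.1 hfreq)
  have hz : Tendsto (y ∘ φ) atTop (𝓝 p) := hy.comp hφ.tendsto_atTop
  -- pair each term with a later, different one: both sequences still converge to `p`
  have (k : ℕ) : ∃ m ≥ k, y (φ m) ≠ y (φ k) :=
    ((hz.eventually_ne (Ne.symm (hφp k))).and (eventually_ge_atTop k)).exists.imp
      fun m hm => ⟨hm.2, hm.1⟩
  choose m hmk hm using this
  obtain ⟨h, hh, hnot⟩ := hX.exists_continuous_not_tendsto_uniformity atTop le_rfl hz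
    (hz.comp (tendsto_atTop_mono hmk tendsto_id))
    (Eventually.of_forall fun k => ⟨Ne.symm (hm k), hφp k, hφp (m k)⟩)
  exact hnot ((((hh.tendsto p).comp hz).prodMk_nhds ((hh.tendsto p).comp
    (hz.comp (tendsto_atTop_mono hmk tendsto_id)))).mono_right (nhds_le_uniformity _))

end Tychonoff

section UniformSpace

variable {X : Type*} [UniformSpace X] [T2Space X]

theorem IsFSpace.eventually_imp_eq_of_tendsto_uniformity (hX : IsFSpace X) {u w : ℕ → X}
    (huw : Tendsto (fun n => (u n, w n)) atTop (𝓤 X)) (p : X) :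
    ∀ᶠ n in atTop, u n = p → w n = p := by
  have : T35Space X := {}
  by_contra hfreq
  simp only [not_eventually, Classical.not_imp] at hfreq
  obtain ⟨φ, hφ, hφp⟩ := extraction_of_frequently_atTop hfreq
  have hw : Tendsto (w ∘ φ) atTop (𝓝 p) := by
    refine Uniform.tendsto_nhds_right.2 ?_
    simpa [Function.comp_def, hφp] using huw.comp hφ.tendsto_atTop
  obtain ⟨k, hk⟩ := (hX.eventually_eq_of_tendsto hw).exists
  exact (hφp k).2 hk

theorem IsFSpace.eventually_eq_of_tendsto_uniformity [CompactSpace X] (hX : IsFSpace X)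
    {u w : ℕ → X} (huw : Tendsto (fun n => (u n, w n)) atTop (𝓤 X)) :
    ∀ᶠ n in atTop, u n = w n := by
  by_contra hfreq
  have : (atTop ⊓ 𝓟 {n | u n ≠ w n}).NeBot := frequently_iff_neBot.1 (not_eventually.1 hfreq)
  set l := Ultrafilter.of (atTop ⊓ 𝓟 {n | u n ≠ w n})
  have hl : (l : Filter ℕ) ≤ atTop ⊓ 𝓟 {n | u n ≠ w n} := Ultrafilter.of_le _
  set p := (l.map u).lim
  have hu : Tendsto u l (𝓝 p) := (l.map u).le_nhds_lim
  have hw : Tendsto w l (𝓝 p) := hu.congr_uniformity (huw.mono_left (hl.trans inf_le_left))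
  have hfar : ∀ᶠ n in l, u n ≠ w n ∧ u n ≠ p ∧ w n ≠ p := by
    filter_upwards [hl (mem_inf_of_right (mem_principal_self _)),
      (hl.trans inf_le_left) (hX.eventually_imp_eq_of_tendsto_uniformity huw p),
      (hl.trans inf_le_left) (hX.eventually_imp_eq_of_tendsto_uniformity huw.uniformity_symm p)]
      with n hne hup hwp
    exact ⟨hne, fun h => hne (h.trans (hup h).symm), fun h => hne ((hwp h).trans h.symm)⟩
  obtain ⟨h, hh, hnot⟩ :=
    hX.exists_continuous_not_tendsto_uniformity l (hl.trans inf_le_left) hu hw hfar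
  exact hnot (Tendsto.comp (CompactSpace.uniformContinuous_of_continuous hh) huw)

end UniformSpace

/-- For a compact Hausdorff F-space `X`, the space `C_k(X, X)` contains no non-trivial
convergent sequences: every sequence converging to `f` is eventually equal to `f`. -/
theorem no_nontrivial_convergent_sequences
    (X : Type*) [TopologicalSpace X] [CompactSpace X] [T2Space X] (hX : IsFSpace X)
    (F : ℕ → C(X, X)) (f : C(X, X))
    (hconv : Filter.Tendsto F Filter.atTop (nhds f)) :
    ∃ N : ℕ, ∀ n ≥ N, F n = f := by
  rcases isEmpty_or_nonempty X with _ | _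
  · exact ⟨0, fun n _ => ContinuousMap.ext isEmptyElim⟩
  let _ : UniformSpace X := uniformSpaceOfCompactR1
  have (n : ℕ) : ∃ x, F n x = f x → F n = f := by
    by_contra! h
    exact (h (Classical.arbitrary X)).2 (ContinuousMap.ext fun x => (h x).1)
  choose x hx using this
  have hunif : Tendsto (fun n => (f (x n), F n (x n))) atTop (𝓤 X) :=
    (tendstoUniformly_iff_tendsto.1 (ContinuousMap.tendsto_iff_tendstoUniformly.1 hconv)).comp
      (tendsto_id.prodMk tendsto_top)
  exact eventually_atTop.1
    ((hX.eventually_eq_of_tendsto_uniformity hunif).mono fun n hn => hx n hn.symm)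
end
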